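/- arXiv:1507.07128 — 9 statements merged into one kernel-verified Lean document; each statement's English description precedes it below -/
import Mathlib

section
/- Let A and B be contractions on complex Hilbert spaces H_A and H_B. If A ∼ B (that is, there exist a linear isometry Ω : H_A → H_B whose range reduces B and satisfies Ω∘A = B∘Ω, and a linear isometry Ω' : H_B → H_A whose range reduces A and satisfies Ω'∘B = A∘Ω'), then A and B are unitarily equivalent, i.e., there is a unitary operator W : H_A → H_B with W∘A = B∘W. -/
/-!
`ψ := Ω' ∘ Ω` is an isometry of `HA` into `N := range Ω'` commuting with `A`, and also with `A†`
because an isometry intertwining two operators whose range is invariant under the adjoint of the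
second intertwines the adjoints as well. A Schröder–Bernstein argument then identifies `HA` with
`N`: the closed span `E` of the `ψ ^ n (Nᗮ)`, `n ≥ 0`, reduces `A` and satisfies `ψ E ≤ E` and
`E ⊓ N ≤ ψ E`, so the map that is `ψ` on `E` and the identity on `Eᗮ` is an isometry of `HA`
onto `N` commuting with `A`. Composing it with the inverse of `Ω' : HB ≃ N` gives `W`.
-/

open ContinuousLinearMap

section

open Module End Submodule

namespace LinearMap

variable {R M : Type*} [Semiring R] [AddCommMonoid M] [Module R M]

def orbitSpan (f : Module.End R M) (C : Submodule R M) : Submodule R M :=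
  ⨆ n : ℕ, C.map (f ^ n)

theorem orbitSpan_eq_sup (f : Module.End R M) (C : Submodule R M) :
    f.orbitSpan C = C ⊔ (f.orbitSpan C).map f := by
  rw [orbitSpan, Submodule.map_iSup, ← sup_iSup_nat_succ, pow_zero, one_eq_id, map_id]
  simp_rw [← map_comp, ← mul_eq_comp, pow_succ']

theorem orbitSpan_mem_invtSubmodule (f : Module.End R M) (C : Submodule R M) :
    f.orbitSpan C ∈ invtSubmodule f :=
  (mem_invtSubmodule_iff_map_le f).2 <| by
    conv_rhs => rw [f.orbitSpan_eq_sup C]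
    exact le_sup_right

theorem orbitSpan_mem_invtSubmodule_of_commute {f g : Module.End R M}
    (hfg : Commute f g) {C : Submodule R M} (hC : C ∈ invtSubmodule g) :
    f.orbitSpan C ∈ invtSubmodule g := by
  rw [mem_invtSubmodule_iff_map_le, orbitSpan, Submodule.map_iSup]
  refine iSup_mono fun n => ?_
  rw [← map_comp, ← mul_eq_comp, ((hfg.pow_left n).eq).symm, mul_eq_comp, map_comp]
  exact map_mono ((mem_invtSubmodule_iff_map_le g).1 hC)

end LinearMap

theorem LinearIsometry.exists_linearIsometryEquiv_apply_eq {R E F G : Type*} [Ring R]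
    [NormedAddCommGroup E] [NormedAddCommGroup F] [NormedAddCommGroup G]
    [Module R E] [Module R F] [Module R G] (U : G →ₗᵢ[R] E) (V : F →ₗᵢ[R] E)
    (h : LinearMap.range U.toLinearMap = LinearMap.range V.toLinearMap) :
    ∃ W : G ≃ₗᵢ[R] F, ∀ x, V (W x) = U x :=
  ⟨U.equivRange.trans ((LinearIsometryEquiv.ofEq _ _ h).trans V.equivRange.symm), fun _ =>
    congrArg Subtype.val (V.equivRange.apply_symm_apply _)⟩

variable {𝕜 H K : Type*} [RCLike 𝕜]
  [NormedAddCommGroup H] [InnerProductSpace 𝕜 H] [NormedAddCommGroup K] [InnerProductSpace 𝕜 K]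

theorem LinearIsometry.map_adjoint_apply_of_intertwines [CompleteSpace H] [CompleteSpace K]
    (V : H →ₗᵢ[𝕜] K) {A : H →L[𝕜] H} {B : K →L[𝕜] K} (hV : ∀ x, V (A x) = B (V x))
    (hB : ∀ y ∈ Set.range V, adjoint B y ∈ Set.range V) (x : H) :
    V (adjoint A x) = adjoint B (V x) := by
  obtain ⟨z, hz⟩ := hB (V x) ⟨x, rfl⟩
  suffices adjoint A x = z by rw [this, hz]
  refine ext_inner_right 𝕜 fun w => ?_
  rw [adjoint_inner_left, ← V.inner_map_map, hV, ← adjoint_inner_left, ← hz, V.inner_map_map]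

theorem Submodule.commute_starProjection_of_mem_invtSubmodule [CompleteSpace H]
    {E : Submodule 𝕜 H} [E.HasOrthogonalProjection] {T : H →L[𝕜] H}
    (hT : E ∈ invtSubmodule (T : H →ₗ[𝕜] H)) (hT' : E ∈ invtSubmodule (adjoint T : H →ₗ[𝕜] H)) :
    Commute E.starProjection T :=
  E.isIdempotentElem_starProjection.commute_iff.2
    ⟨by rwa [range_starProjection],
      by rw [ker_starProjection]; exact orthogonal_mem_invtSubmodule hT'⟩

namespace LinearIsometry

section

variable (ψ : H →ₗᵢ[𝕜] H)

theorem topologicalClosure_orbitSpan_inf_orthogonal_le [CompleteSpace H] (C : Submodule 𝕜 H)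
    [C.HasOrthogonalProjection] (hψ : LinearMap.range ψ.toLinearMap ≤ Cᗮ) :
    (ψ.toLinearMap.orbitSpan C).topologicalClosure ⊓ Cᗮ ≤
      (ψ.toLinearMap.orbitSpan C).topologicalClosure.map ψ.toLinearMap := by
  set S := ψ.toLinearMap.orbitSpan C
  have hclosed : IsClosed (S.topologicalClosure.map ψ.toLinearMap : Set H) := by
    rw [map_coe]
    exact (ψ.isometry.isUniformInducing.isComplete_iff.2
      S.isClosed_topologicalClosure.isComplete).isClosed
  -- The projection onto `Cᗮ` kills the first summand of `S = C ⊔ ψ S` and fixes the second.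
  have hS : Set.MapsTo Cᗮ.starProjection S (S.topologicalClosure.map ψ.toLinearMap) := by
    intro s hs
    have hsplit : S = C ⊔ S.map ψ.toLinearMap := ψ.toLinearMap.orbitSpan_eq_sup C
    rw [SetLike.mem_coe, hsplit] at hs
    obtain ⟨c, hc, m, ⟨s', hs', rfl⟩, rfl⟩ := mem_sup.1 hs
    rw [map_add, starProjection_orthogonal_apply_eq_zero hc, zero_add,
      starProjection_eq_self_iff.2 (hψ ⟨s', rfl⟩)]
    exact mem_map_of_mem (le_topologicalClosure S hs')
  rintro z ⟨hzS, hzC⟩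
  have := map_mem_closure Cᗮ.starProjection.continuous hzS hS
  rwa [hclosed.closure_eq, starProjection_eq_self_iff.2 hzC] at this

end

section

variable (ψ : H →ₗᵢ[𝕜] H) (E : Submodule 𝕜 H) [E.HasOrthogonalProjection]

noncomputable def piecewiseId (hE : E ∈ invtSubmodule ψ.toLinearMap) : H →ₗᵢ[𝕜] H where
  toLinearMap := (ψ.toContinuousLinearMap ∘L E.starProjection + Eᗮ.starProjection : H →L[𝕜] H)
  norm_map' x := by
    have hψx : ψ (E.starProjection x) ∈ E := hE (E.starProjection_apply_mem x)
    have hUx := norm_add_sq_eq_norm_sq_add_norm_sq_of_inner_eq_zero _ _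
      (inner_right_of_mem_orthogonal hψx (Eᗮ.starProjection_apply_mem x))
    have hx := norm_add_sq_eq_norm_sq_add_norm_sq_of_inner_eq_zero _ _
      (inner_right_of_mem_orthogonal (E.starProjection_apply_mem x)
        (Eᗮ.starProjection_apply_mem x))
    rw [starProjection_add_starProjection_orthogonal] at hx
    change ‖ψ (E.starProjection x) + Eᗮ.starProjection x‖ = ‖x‖
    rw [← mul_self_inj (norm_nonneg _) (norm_nonneg _), hUx, hx, ψ.norm_map]

variable {ψ E}

theorem piecewiseId_apply (hE : E ∈ invtSubmodule ψ.toLinearMap) (x : H) :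
    ψ.piecewiseId E hE x = ψ (E.starProjection x) + Eᗮ.starProjection x :=
  rfl

theorem range_piecewiseId (hE : E ∈ invtSubmodule ψ.toLinearMap) :
    LinearMap.range (ψ.piecewiseId E hE).toLinearMap = E.map ψ.toLinearMap ⊔ Eᗮ := by
  apply le_antisymm
  · rintro _ ⟨x, rfl⟩
    exact add_mem_sup (mem_map_of_mem (E.starProjection_apply_mem x))
      (Eᗮ.starProjection_apply_mem x)
  · rw [sup_le_iff]
    constructor
    · rintro _ ⟨e, he, rfl⟩
      refine ⟨e, ?_⟩
      change ψ.piecewiseId E hE e = ψ e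
      rw [piecewiseId_apply, starProjection_eq_self_iff.2 he,
        starProjection_orthogonal_apply_eq_zero he, add_zero]
    · intro w hw
      refine ⟨w, ?_⟩
      change ψ.piecewiseId E hE w = w
      rw [piecewiseId_apply, (starProjection_apply_eq_zero_iff E).2 hw, map_zero, zero_add,
        starProjection_eq_self_iff.2 hw]

theorem piecewiseId_apply_comm [CompleteSpace H] (hE : E ∈ invtSubmodule ψ.toLinearMap)
    {T : H →L[𝕜] H} (hψT : ∀ x, ψ (T x) = T (ψ x)) (hT : E ∈ invtSubmodule (T : H →ₗ[𝕜] H))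
    (hT' : E ∈ invtSubmodule (adjoint T : H →ₗ[𝕜] H)) (x : H) :
    ψ.piecewiseId E hE (T x) = T (ψ.piecewiseId E hE x) := by
  have hE' : Eᗮ ∈ invtSubmodule (adjoint T : H →ₗ[𝕜] H) :=
    orthogonal_mem_invtSubmodule (by rwa [adjoint_adjoint])
  have hP := DFunLike.congr_fun (commute_starProjection_of_mem_invtSubmodule hT hT').eq x
  have hP' := DFunLike.congr_fun
    (commute_starProjection_of_mem_invtSubmodule (orthogonal_mem_invtSubmodule hT') hE').eq x
  simp only [mul_apply_eq_comp] at hP hP'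
  rw [piecewiseId_apply, piecewiseId_apply, map_add, ← hψT, hP, hP']

end

section

variable [CompleteSpace H] (ψ : H →ₗᵢ[𝕜] H)

theorem map_topologicalClosure_orbitSpan_sup_orthogonal (C : Submodule 𝕜 H)
    [C.HasOrthogonalProjection] (hψ : LinearMap.range ψ.toLinearMap ≤ Cᗮ) :
    (ψ.toLinearMap.orbitSpan C).topologicalClosure.map ψ.toLinearMap ⊔
      (ψ.toLinearMap.orbitSpan C).topologicalClosureᗮ = Cᗮ := by
  set E := (ψ.toLinearMap.orbitSpan C).topologicalClosure
  have hCE : Eᗮ ≤ Cᗮ := orthogonal_le <|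
    (le_sup_left.trans (ψ.toLinearMap.orbitSpan_eq_sup C).ge).trans (le_topologicalClosure _)
  refine le_antisymm (sup_le (LinearMap.map_le_range.trans hψ) hCE) fun y hy => ?_
  have hEy : E.starProjection y ∈ E ⊓ Cᗮ := by
    refine ⟨E.starProjection_apply_mem y, ?_⟩
    rw [← sub_sub_cancel y (E.starProjection y)]
    exact sub_mem hy (hCE (sub_starProjection_mem_orthogonal y))
  rw [← E.starProjection_add_starProjection_orthogonal y]
  exact add_mem_sup (topologicalClosure_orbitSpan_inf_orthogonal_le ψ C hψ hEy)
    (Eᗮ.starProjection_apply_mem y)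

theorem exists_range_eq_of_range_le {N : Submodule 𝕜 H} [N.HasOrthogonalProjection]
    (hψN : LinearMap.range ψ.toLinearMap ≤ N) {T : H →L[𝕜] H}
    (hψT : ∀ x, ψ (T x) = T (ψ x)) (hψT' : ∀ x, ψ (adjoint T x) = adjoint T (ψ x))
    (hT : N ∈ invtSubmodule (T : H →ₗ[𝕜] H)) (hT' : N ∈ invtSubmodule (adjoint T : H →ₗ[𝕜] H)) :
    ∃ U : H →ₗᵢ[𝕜] H, LinearMap.range U.toLinearMap = N ∧ ∀ x, U (T x) = T (U x) := by
  set E := (ψ.toLinearMap.orbitSpan Nᗮ).topologicalClosure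
  have hEψ : E ∈ invtSubmodule ψ.toLinearMap :=
    topologicalClosure_mem_invtSubmodule (f := ψ.toContinuousLinearMap)
      (ψ.toLinearMap.orbitSpan_mem_invtSubmodule _)
  have hET : E ∈ invtSubmodule (T : H →ₗ[𝕜] H) :=
    topologicalClosure_mem_invtSubmodule <| LinearMap.orbitSpan_mem_invtSubmodule_of_commute
      (LinearMap.ext hψT) (orthogonal_mem_invtSubmodule hT')
  have hET' : E ∈ invtSubmodule (adjoint T : H →ₗ[𝕜] H) :=
    topologicalClosure_mem_invtSubmodule <| LinearMap.orbitSpan_mem_invtSubmodule_of_commute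
      (LinearMap.ext hψT') (orthogonal_mem_invtSubmodule (by rwa [adjoint_adjoint]))
  refine ⟨ψ.piecewiseId E hEψ, ?_, piecewiseId_apply_comm hEψ hψT hET hET'⟩
  rw [range_piecewiseId, map_topologicalClosure_orbitSpan_sup_orthogonal ψ Nᗮ
    (by rwa [orthogonal_orthogonal]), orthogonal_orthogonal]

end

end LinearIsometry

end

theorem stmt_0_general
    {HA HB : Type*}
    [NormedAddCommGroup HA] [InnerProductSpace ℂ HA] [CompleteSpace HA]
    [NormedAddCommGroup HB] [InnerProductSpace ℂ HB] [CompleteSpace HB]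
    (A : HA →L[ℂ] HA) (B : HB →L[ℂ] HB)
    (Ω : HA →ₗᵢ[ℂ] HB) (Ω' : HB →ₗᵢ[ℂ] HA)
    (hΩ : ∀ x, Ω (A x) = B (Ω x))
    (hΩ' : ∀ y, Ω' (B y) = A (Ω' y))
    (hred : ∀ y ∈ Set.range ⇑Ω, B y ∈ Set.range ⇑Ω ∧ adjoint B y ∈ Set.range ⇑Ω)
    (hred' : ∀ x ∈ Set.range ⇑Ω', A x ∈ Set.range ⇑Ω' ∧ adjoint A x ∈ Set.range ⇑Ω') :
    ∃ W : HA ≃ₗᵢ[ℂ] HB, ∀ x, W (A x) = B (W x) := by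
  have hΩ_adj := Ω.map_adjoint_apply_of_intertwines hΩ fun y hy => (hred y hy).2
  have hΩ'_adj := Ω'.map_adjoint_apply_of_intertwines hΩ' fun x hx => (hred' x hx).2
  have : CompleteSpace (LinearMap.range Ω'.toLinearMap) := by
    refine IsComplete.completeSpace_coe ?_
    rw [LinearMap.coe_range]
    exact Ω'.isometry.isUniformInducing.isComplete_range
  obtain ⟨U, hU, hUA⟩ := (Ω'.comp Ω).exists_range_eq_of_range_le (T := A)
    (LinearMap.range_comp_le_range Ω.toLinearMap Ω'.toLinearMap)
    (fun x => by simp [hΩ, hΩ']) (fun x => by simp [hΩ_adj, hΩ'_adj])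
    (fun x hx => (hred' x hx).1) (fun x hx => (hred' x hx).2)
  obtain ⟨W, hW⟩ := U.exists_linearIsometryEquiv_apply_eq Ω' hU
  exact ⟨W, fun x => Ω'.injective (by rw [hW, hUA, ← hW, hΩ'])⟩

/-- If `A ∼ B` (each is unitarily equivalent to the restriction of the other to a reducing
subspace), then `A` and `B` are unitarily equivalent. -/
theorem stmt_0
    {HA HB : Type*}
    [NormedAddCommGroup HA] [InnerProductSpace ℂ HA] [CompleteSpace HA]
    [NormedAddCommGroup HB] [InnerProductSpace ℂ HB] [CompleteSpace HB]
    (A : HA →L[ℂ] HA) (B : HB →L[ℂ] HB)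
    (hA : ‖A‖ ≤ 1) (hB : ‖B‖ ≤ 1)
    (Ω : HA →ₗᵢ[ℂ] HB) (Ω' : HB →ₗᵢ[ℂ] HA)
    (hΩ : ∀ x, Ω (A x) = B (Ω x))
    (hΩ' : ∀ y, Ω' (B y) = A (Ω' y))
    (hred : ∀ y ∈ Set.range ⇑Ω, B y ∈ Set.range ⇑Ω ∧ adjoint B y ∈ Set.range ⇑Ω)
    (hred' : ∀ x ∈ Set.range ⇑Ω', A x ∈ Set.range ⇑Ω' ∧ adjoint A x ∈ Set.range ⇑Ω') :
    ∃ W : HA ≃ₗᵢ[ℂ] HB, ∀ x, W (A x) = B (W x) :=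
  stmt_0_general A B Ω Ω' hΩ hΩ' hred hred'
end

section
/- Let B be a completely nonunitary contraction on a complex Hilbert space H_B and let A be a contraction on a complex Hilbert space H_A with A ≼ B (that is, there exists a linear isometry Ω : H_A → H_B with Ω∘A = B∘Ω). Then the Hilbert space dimension of the defect space 𝔇_A is at most the Hilbert space dimension of the defect space 𝔇_B. -/
/-!
For `x ∈ H_A` we have `‖D_B Ω x‖² = ‖Ω x‖² - ‖B Ω x‖² = ‖x‖² - ‖A x‖² = ‖D_A x‖²`, so
`D_A x ↦ D_B Ω x` is a well-defined isometry, which extends to a linear isometry of `𝔇_A` into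
`𝔇_B`. An orthonormal family is never larger than a Hilbert basis: each of its members has a
nonzero coefficient along some basis vector, and by Bessel's inequality each basis vector
accounts for only countably many members.
-/

open ContinuousLinearMap
open scoped InnerProductSpace

universe u v

section HilbertDimension

variable {𝕜 E : Type*} [RCLike 𝕜] [NormedAddCommGroup E] [InnerProductSpace 𝕜 E]

theorem HilbertBasis.exists_inner_ne_zero {ι : Type*} (b : HilbertBasis ι 𝕜 E) {x : E}
    (hx : x ≠ 0) : ∃ i, ⟪b i, x⟫_𝕜 ≠ 0 := by
  by_contra! h
  have : b.repr x = 0 := lp.ext <| funext fun i => by simp [b.repr_apply_apply, h i]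
  exact hx (by simpa using this)

theorem Orthonormal.countable_setOf_inner_ne_zero {ι : Type*} {v : ι → E}
    (hv : Orthonormal 𝕜 v) (x : E) : {i | ⟪v i, x⟫_𝕜 ≠ 0}.Countable :=
  hv.inner_products_summable x |>.countable_support.mono fun i hi => by simpa using hi

theorem Orthonormal.cardinal_lift_le_of_hilbertBasis {ι : Type u} {κ : Type v} {v : ι → E}
    (hv : Orthonormal 𝕜 v) (b : HilbertBasis κ 𝕜 E) :
    Cardinal.lift.{v} (Cardinal.mk ι) ≤ Cardinal.lift.{u} (Cardinal.mk κ) := by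
  cases finite_or_infinite κ with
  | inl _ =>
    have := Fintype.ofFinite κ
    simpa [Cardinal.mk_fintype, rank_eq_card_basis b.toOrthonormalBasis.toBasis] using
      hv.linearIndependent.cardinal_lift_le_rank
  | inr _ =>
    choose f hf using fun i => b.exists_inner_ne_zero (hv.ne_zero i)
    have hfiber (j : κ) : Cardinal.lift.{v} (Cardinal.mk (f ⁻¹' {j})) ≤ Cardinal.aleph0 := by
      refine Cardinal.lift_le_aleph0.mpr <| Cardinal.le_aleph0_iff_set_countable.mpr ?_
      refine (hv.countable_setOf_inner_ne_zero (b j)).mono fun i (hi : f i = j) => ?_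
      rw [Set.mem_ofPred_eq, ← hi, ← inner_conj_symm]
      exact (map_ne_zero _).mpr (hf i)
    calc Cardinal.lift.{v} (Cardinal.mk ι)
        ≤ Cardinal.lift.{u} (Cardinal.mk κ) * Cardinal.aleph0 :=
          Cardinal.lift_mk_le_lift_mk_mul_of_lift_mk_preimage_le f hfiber
      _ = Cardinal.lift.{u} (Cardinal.mk κ) :=
          Cardinal.mul_aleph0_eq (Cardinal.aleph0_le_lift.mpr (Cardinal.aleph0_le_mk κ))

end HilbertDimension

section RangeClosure

variable {𝕜 E F G : Type*} [NormedField 𝕜] [AddCommGroup E] [Module 𝕜 E]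
  [NormedAddCommGroup F] [NormedSpace 𝕜 F] [NormedAddCommGroup G] [NormedSpace 𝕜 G]

def LinearMap.toRangeClosure (T : E →ₗ[𝕜] F) : E →ₗ[𝕜] (LinearMap.range T).topologicalClosure :=
  T.codRestrict _ fun x => (LinearMap.range T).le_topologicalClosure (LinearMap.mem_range_self T x)

theorem LinearMap.denseRange_toRangeClosure (T : E →ₗ[𝕜] F) : DenseRange T.toRangeClosure := by
  intro y
  rw [closure_subtype, ← Set.range_comp]
  exact (Submodule.topologicalClosure_coe _).subset y.2

noncomputable def LinearMap.rangeClosureEquivOfNormEq [CompleteSpace F] [CompleteSpace G]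
    (T : E →ₗ[𝕜] F) (S : E →ₗ[𝕜] G) (h : ∀ x, ‖S x‖ = ‖T x‖) :
    (LinearMap.range T).topologicalClosure ≃ₗᵢ[𝕜] (LinearMap.range S).topologicalClosure :=
  (LinearEquiv.refl 𝕜 E).extendOfIsometry T.toRangeClosure S.toRangeClosure
    T.denseRange_toRangeClosure S.denseRange_toRangeClosure h

end RangeClosure

section Defect

variable {𝕜 E F : Type*} [RCLike 𝕜] [NormedAddCommGroup E] [InnerProductSpace 𝕜 E]
  [CompleteSpace E] [NormedAddCommGroup F] [InnerProductSpace 𝕜 F] [CompleteSpace F]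

theorem ContinuousLinearMap.norm_apply_sq_of_comp_self_eq {D : E →L[𝕜] E} {A : E →L[𝕜] F}
    (hD : IsSelfAdjoint D) (h : D ∘L D = 1 - adjoint A ∘L A) (x : E) :
    ‖D x‖ ^ 2 = ‖x‖ ^ 2 - ‖A x‖ ^ 2 := by
  rw [D.apply_norm_sq_eq_inner_adjoint_left, A.apply_norm_sq_eq_inner_adjoint_left,
    hD.adjoint_eq, h, sub_apply, one_apply_eq_self, inner_sub_left, map_sub, inner_self_eq_norm_sq]

end Defect

theorem stmt_2_general
    {HA HB : Type*}
    [NormedAddCommGroup HA] [InnerProductSpace ℂ HA] [CompleteSpace HA]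
    [NormedAddCommGroup HB] [InnerProductSpace ℂ HB] [CompleteSpace HB]
    (A : HA →L[ℂ] HA) (B : HB →L[ℂ] HB)
    -- `A ≼ B`
    (Ω : HA →ₗᵢ[ℂ] HB) (hΩ : ∀ x, Ω (A x) = B (Ω x))
    -- the defect operators
    (DA : HA →L[ℂ] HA) (DB : HB →L[ℂ] HB)
    (hDA : DA.IsPositive ∧ DA ∘L DA = 1 - adjoint A ∘L A)
    (hDB : DB.IsPositive ∧ DB ∘L DB = 1 - adjoint B ∘L B)
    -- orthonormal bases of the defect spaces
    {ιA : Type u} {ιB : Type v}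
    (bA : HilbertBasis ιA ℂ (LinearMap.range (DA : HA →ₗ[ℂ] HA)).topologicalClosure)
    (bB : HilbertBasis ιB ℂ (LinearMap.range (DB : HB →ₗ[ℂ] HB)).topologicalClosure) :
    Cardinal.lift.{v} (Cardinal.mk ιA) ≤ Cardinal.lift.{u} (Cardinal.mk ιB) := by
  let S : HA →ₗ[ℂ] HB := (DB : HB →ₗ[ℂ] HB) ∘ₗ Ω.toLinearMap
  have hS (x : HA) : ‖S x‖ = ‖DA x‖ := by
    refine (sq_eq_sq₀ (norm_nonneg _) (norm_nonneg _)).mp ?_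
    calc ‖DB (Ω x)‖ ^ 2 = ‖Ω x‖ ^ 2 - ‖B (Ω x)‖ ^ 2 :=
          DB.norm_apply_sq_of_comp_self_eq hDB.1.isSelfAdjoint hDB.2 _
      _ = ‖x‖ ^ 2 - ‖A x‖ ^ 2 := by rw [← hΩ, Ω.norm_map, Ω.norm_map]
      _ = ‖DA x‖ ^ 2 := (DA.norm_apply_sq_of_comp_self_eq hDA.1.isSelfAdjoint hDA.2 x).symm
  have hle : (LinearMap.range S).topologicalClosure ≤
      (LinearMap.range (DB : HB →ₗ[ℂ] HB)).topologicalClosure :=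
    Submodule.topologicalClosure_mono (LinearMap.range_comp_le_range _ _)
  have hv := bA.orthonormal.comp_linearIsometryEquiv (LinearMap.rangeClosureEquivOfNormEq _ S hS)
    |>.comp_linearIsometry ⟨Submodule.inclusion hle, fun _ => rfl⟩
  exact hv.cardinal_lift_le_of_hilbertBasis bB

/-- If `B` is a completely nonunitary contraction and `A ≼ B`, then the Hilbert space dimension
(the cardinality of an orthonormal basis) of the defect space `𝔇_A` is at most that of `𝔇_B`.
The defect operator `DA` (resp. `DB`) is the positive square root of `1 - A*A`
(resp. `1 - B*B`), and the defect space is the closure of its range. -/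
theorem stmt_2
    {HA HB : Type*}
    [NormedAddCommGroup HA] [InnerProductSpace ℂ HA] [CompleteSpace HA]
    [NormedAddCommGroup HB] [InnerProductSpace ℂ HB] [CompleteSpace HB]
    (A : HA →L[ℂ] HA) (B : HB →L[ℂ] HB)
    (hA : ‖A‖ ≤ 1) (hB : ‖B‖ ≤ 1)
    -- `B` is completely nonunitary
    (hBcnu : ∀ Y : Submodule ℂ HB, IsClosed (Y : Set HB) →
      (∀ y ∈ Y, B y ∈ Y) → (∀ y ∈ Y, adjoint B y ∈ Y) →
      (∀ y ∈ Y, ‖B y‖ = ‖y‖) → (∀ y ∈ Y, ∃ z ∈ Y, B z = y) → Y = ⊥)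
    -- `A ≼ B`
    (Ω : HA →ₗᵢ[ℂ] HB) (hΩ : ∀ x, Ω (A x) = B (Ω x))
    -- the defect operators
    (DA : HA →L[ℂ] HA) (DB : HB →L[ℂ] HB)
    (hDA : DA.IsPositive ∧ DA ∘L DA = 1 - adjoint A ∘L A)
    (hDB : DB.IsPositive ∧ DB ∘L DB = 1 - adjoint B ∘L B)
    -- orthonormal bases of the defect spaces
    {ιA : Type u} {ιB : Type v}
    (bA : HilbertBasis ιA ℂ (LinearMap.range (DA : HA →ₗ[ℂ] HA)).topologicalClosure)
    (bB : HilbertBasis ιB ℂ (LinearMap.range (DB : HB →ₗ[ℂ] HB)).topologicalClosure) :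
    Cardinal.lift.{v} (Cardinal.mk ιA) ≤ Cardinal.lift.{u} (Cardinal.mk ιB) :=
  stmt_2_general A B Ω hΩ DA DB hDA hDB bA bB
end

section
/- Let T₁' : E₁' → E₂', T₂' : E₂' → E₃', T₁'' : E₁'' → E₂'', T₂'' : E₂'' → E₃'' be contractions between complex Hilbert spaces. Then the factorization (T₂' ⊕ T₂'')(T₁' ⊕ T₁'') of the direct sum operators (acting between the Hilbert space orthogonal direct sums E₁' ⊕ E₁'' → E₂' ⊕ E₂'' → E₃' ⊕ E₃'') is regular if and only if both factorizations T₂'T₁' and T₂''T₁'' are regular. -/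
/-!
Everything splits along the direct sum. The adjoint of `S = T' ⊕ T''` is `T'* ⊕ T''*`, so
`1 - S*S = (1 - T'*T') ⊕ (1 - T''*T'')`, and since positive square roots are unique the defect
operator of `S` is `D_{T'} ⊕ D_{T''}`; likewise for `S*`. The range of a direct sum of operators
is the product of the ranges, and two such products meet in the product of the componentwise
intersections, which is zero exactly when both components are.
-/

open ContinuousLinearMap

namespace ContinuousLinearMap

section Normed

variable {𝕜 E' E'' F' F'' G' G'' : Type*} [NormedField 𝕜]
  [NormedAddCommGroup E'] [NormedSpace 𝕜 E'] [NormedAddCommGroup E''] [NormedSpace 𝕜 E'']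
  [NormedAddCommGroup F'] [NormedSpace 𝕜 F'] [NormedAddCommGroup F''] [NormedSpace 𝕜 F'']
  [NormedAddCommGroup G'] [NormedSpace 𝕜 G'] [NormedAddCommGroup G''] [NormedSpace 𝕜 G'']

def withLpProdMap (A : E' →L[𝕜] F') (B : E'' →L[𝕜] F'') :
    WithLp 2 (E' × E'') →L[𝕜] WithLp 2 (F' × F'') :=
  ((WithLp.prodContinuousLinearEquiv 2 𝕜 F' F'').symm : F' × F'' →L[𝕜] WithLp 2 (F' × F'')) ∘L
    A.prodMap B ∘L
      (WithLp.prodContinuousLinearEquiv 2 𝕜 E' E'' : WithLp 2 (E' × E'') →L[𝕜] E' × E'')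

@[simp]
lemma withLpProdMap_apply (A : E' →L[𝕜] F') (B : E'' →L[𝕜] F'') (x : WithLp 2 (E' × E'')) :
    A.withLpProdMap B x = WithLp.toLp 2 (A x.fst, B x.snd) := rfl

lemma withLpProdMap_comp (A : F' →L[𝕜] G') (B : F'' →L[𝕜] G'') (C : E' →L[𝕜] F')
    (D : E'' →L[𝕜] F'') :
    (A ∘L C).withLpProdMap (B ∘L D) = A.withLpProdMap B ∘L C.withLpProdMap D := rfl

lemma withLpProdMap_one : (1 : E' →L[𝕜] E').withLpProdMap (1 : E'' →L[𝕜] E'') = 1 := rfl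

lemma withLpProdMap_sub (A C : E' →L[𝕜] F') (B D : E'' →L[𝕜] F'') :
    (A - C).withLpProdMap (B - D) = A.withLpProdMap B - C.withLpProdMap D := rfl

lemma range_withLpProdMap (A : E' →L[𝕜] F') (B : E'' →L[𝕜] F'') :
    LinearMap.range (A.withLpProdMap B : WithLp 2 (E' × E'') →ₗ[𝕜] WithLp 2 (F' × F'')) =
      ((LinearMap.range (A : E' →ₗ[𝕜] F')).prod (LinearMap.range (B : E'' →ₗ[𝕜] F''))).map
        ((WithLp.linearEquiv 2 𝕜 (F' × F'')).symm : F' × F'' →ₗ[𝕜] WithLp 2 (F' × F'')) := by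
  ext x
  simp only [LinearMap.mem_range, Submodule.map_equiv_eq_comap_symm, Submodule.mem_comap,
    Submodule.mem_prod]
  constructor
  · rintro ⟨y, rfl⟩
    exact ⟨⟨y.fst, rfl⟩, ⟨y.snd, rfl⟩⟩
  · rintro ⟨⟨u, hu⟩, ⟨v, hv⟩⟩
    exact ⟨WithLp.toLp 2 (u, v), congrArg (WithLp.toLp 2) (Prod.ext hu hv)⟩

lemma range_withLpProdMap_inf_eq_bot_iff (A : E' →L[𝕜] G') (B : E'' →L[𝕜] G'')
    (C : F' →L[𝕜] G') (D : F'' →L[𝕜] G'') :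
    LinearMap.range (A.withLpProdMap B : WithLp 2 (E' × E'') →ₗ[𝕜] WithLp 2 (G' × G'')) ⊓
        LinearMap.range (C.withLpProdMap D : WithLp 2 (F' × F'') →ₗ[𝕜] WithLp 2 (G' × G'')) = ⊥ ↔
      LinearMap.range (A : E' →ₗ[𝕜] G') ⊓ LinearMap.range (C : F' →ₗ[𝕜] G') = ⊥ ∧
        LinearMap.range (B : E'' →ₗ[𝕜] G'') ⊓ LinearMap.range (D : F'' →ₗ[𝕜] G'') = ⊥ := by
  rw [range_withLpProdMap, range_withLpProdMap, ← Submodule.map_inf _ (LinearEquiv.injective _),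
    Submodule.map_eq_bot_iff, Submodule.prod_inf_prod, Submodule.prod_eq_bot_iff]

end Normed

section Inner

variable {𝕜 E' E'' F' F'' : Type*} [RCLike 𝕜]
  [NormedAddCommGroup E'] [InnerProductSpace 𝕜 E'] [NormedAddCommGroup E'']
  [InnerProductSpace 𝕜 E''] [NormedAddCommGroup F'] [InnerProductSpace 𝕜 F']
  [NormedAddCommGroup F''] [InnerProductSpace 𝕜 F'']

lemma IsPositive.withLpProdMap {A : E' →L[𝕜] E'} {B : E'' →L[𝕜] E''} (hA : A.IsPositive)
    (hB : B.IsPositive) : (A.withLpProdMap B).IsPositive := by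
  refine ⟨fun x y => congrArg₂ (· + ·) (hA.1 x.fst y.fst) (hB.1 x.snd y.snd), fun x => ?_⟩
  simp only [reApplyInnerSelf_apply, withLpProdMap_apply, WithLp.prod_inner_apply, map_add]
  exact add_nonneg (hA.re_inner_nonneg_left _) (hB.re_inner_nonneg_left _)

variable [CompleteSpace E'] [CompleteSpace E''] [CompleteSpace F'] [CompleteSpace F'']

lemma adjoint_withLpProdMap (A : E' →L[𝕜] F') (B : E'' →L[𝕜] F'') :
    adjoint (A.withLpProdMap B) = (adjoint A).withLpProdMap (adjoint B) := by
  refine (eq_adjoint_iff _ _ |>.2 fun x y => ?_).symm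
  simp only [withLpProdMap_apply, WithLp.prod_inner_apply, adjoint_inner_left]
  rfl

lemma one_sub_adjoint_comp_withLpProdMap (A : E' →L[𝕜] F') (B : E'' →L[𝕜] F'') :
    1 - adjoint (A.withLpProdMap B) ∘L A.withLpProdMap B =
      (1 - adjoint A ∘L A).withLpProdMap (1 - adjoint B ∘L B) := by
  rw [adjoint_withLpProdMap, ← withLpProdMap_comp, ← withLpProdMap_one, ← withLpProdMap_sub]

lemma one_sub_withLpProdMap_comp_adjoint (A : E' →L[𝕜] F') (B : E'' →L[𝕜] F'') :
    1 - A.withLpProdMap B ∘L adjoint (A.withLpProdMap B) =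
      (1 - A ∘L adjoint A).withLpProdMap (1 - B ∘L adjoint B) := by
  rw [adjoint_withLpProdMap, ← withLpProdMap_comp, ← withLpProdMap_one, ← withLpProdMap_sub]

end Inner

section Complex

variable {E E' E'' : Type*}
  [NormedAddCommGroup E] [InnerProductSpace ℂ E] [CompleteSpace E]
  [NormedAddCommGroup E'] [InnerProductSpace ℂ E'] [CompleteSpace E']
  [NormedAddCommGroup E''] [InnerProductSpace ℂ E''] [CompleteSpace E'']

lemma IsPositive.eq_of_comp_self_eq {A B : E →L[ℂ] E} (hA : A.IsPositive) (hB : B.IsPositive)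
    (h : A ∘L A = B ∘L B) : A = B :=
  (CFC.mul_self_eq_mul_self_iff A B ((nonneg_iff_isPositive A).2 hA)
    ((nonneg_iff_isPositive B).2 hB)).1 h

lemma IsPositive.eq_withLpProdMap_of_comp_self_eq
    {D : WithLp 2 (E' × E'') →L[ℂ] WithLp 2 (E' × E'')} {D' : E' →L[ℂ] E'} {D'' : E'' →L[ℂ] E''}
    (hD : D.IsPositive) (hD' : D'.IsPositive) (hD'' : D''.IsPositive) (h : D ∘L D = (D' ∘L D').withLpProdMap (D'' ∘L D'')) :
    D = D'.withLpProdMap D'' :=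
  hD.eq_of_comp_self_eq (hD'.withLpProdMap hD'') h

end Complex
end ContinuousLinearMap

theorem stmt_5_general
    {E₁' E₂' E₃' E₁'' E₂'' E₃'' : Type*}
    [NormedAddCommGroup E₁'] [InnerProductSpace ℂ E₁'] [CompleteSpace E₁']
    [NormedAddCommGroup E₂'] [InnerProductSpace ℂ E₂'] [CompleteSpace E₂']
    [NormedAddCommGroup E₃'] [InnerProductSpace ℂ E₃'] [CompleteSpace E₃']
    [NormedAddCommGroup E₁''] [InnerProductSpace ℂ E₁''] [CompleteSpace E₁'']
    [NormedAddCommGroup E₂''] [InnerProductSpace ℂ E₂''] [CompleteSpace E₂'']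
    [NormedAddCommGroup E₃''] [InnerProductSpace ℂ E₃''] [CompleteSpace E₃'']
    (T₁' : E₁' →L[ℂ] E₂') (T₂' : E₂' →L[ℂ] E₃')
    (T₁'' : E₁'' →L[ℂ] E₂'') (T₂'' : E₂'' →L[ℂ] E₃'')
    -- the direct sum operators `S₁ = T₁' ⊕ T₁''` and `S₂ = T₂' ⊕ T₂''`
    (S₁ : WithLp 2 (E₁' × E₁'') →L[ℂ] WithLp 2 (E₂' × E₂''))
    (S₂ : WithLp 2 (E₂' × E₂'') →L[ℂ] WithLp 2 (E₃' × E₃''))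
    (hS₁ : ∀ x, WithLp.equiv 2 (E₂' × E₂'') (S₁ x) =
      (T₁' (WithLp.equiv 2 (E₁' × E₁'') x).1, T₁'' (WithLp.equiv 2 (E₁' × E₁'') x).2))
    (hS₂ : ∀ x, WithLp.equiv 2 (E₃' × E₃'') (S₂ x) =
      (T₂' (WithLp.equiv 2 (E₂' × E₂'') x).1, T₂'' (WithLp.equiv 2 (E₂' × E₂'') x).2))
    -- defect operators of `T₂'`, `T₂''`, `S₂` on the respective middle spaces
    (D₂' : E₂' →L[ℂ] E₂') (hD₂' : D₂'.IsPositive ∧ D₂' ∘L D₂' = 1 - adjoint T₂' ∘L T₂')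
    (D₂'' : E₂'' →L[ℂ] E₂'') (hD₂'' : D₂''.IsPositive ∧ D₂'' ∘L D₂'' = 1 - adjoint T₂'' ∘L T₂'')
    (DS₂ : WithLp 2 (E₂' × E₂'') →L[ℂ] WithLp 2 (E₂' × E₂''))
    (hDS₂ : DS₂.IsPositive ∧ DS₂ ∘L DS₂ = 1 - adjoint S₂ ∘L S₂)
    -- defect operators of `T₁'*`, `T₁''*`, `S₁*`
    (D₁s' : E₂' →L[ℂ] E₂') (hD₁s' : D₁s'.IsPositive ∧ D₁s' ∘L D₁s' = 1 - T₁' ∘L adjoint T₁')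
    (D₁s'' : E₂'' →L[ℂ] E₂'') (hD₁s'' : D₁s''.IsPositive ∧ D₁s'' ∘L D₁s'' = 1 - T₁'' ∘L adjoint T₁'')
    (DS₁s : WithLp 2 (E₂' × E₂'') →L[ℂ] WithLp 2 (E₂' × E₂''))
    (hDS₁s : DS₁s.IsPositive ∧ DS₁s ∘L DS₁s = 1 - S₁ ∘L adjoint S₁) :
    (LinearMap.range (DS₂ : WithLp 2 (E₂' × E₂'') →ₗ[ℂ] WithLp 2 (E₂' × E₂'')) ⊓ LinearMap.range (DS₁s : WithLp 2 (E₂' × E₂'') →ₗ[ℂ] WithLp 2 (E₂' × E₂'')) = ⊥) ↔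
      ((LinearMap.range (D₂' : E₂' →ₗ[ℂ] E₂') ⊓ LinearMap.range (D₁s' : E₂' →ₗ[ℂ] E₂') = ⊥) ∧
       (LinearMap.range (D₂'' : E₂'' →ₗ[ℂ] E₂'') ⊓ LinearMap.range (D₁s'' : E₂'' →ₗ[ℂ] E₂'') = ⊥)) := by
  have hS₁ : S₁ = T₁'.withLpProdMap T₁'' := ext fun x => (WithLp.equiv _ _).injective (hS₁ x)
  have hS₂ : S₂ = T₂'.withLpProdMap T₂'' := ext fun x => (WithLp.equiv _ _).injective (hS₂ x)
  have hDS₂ : DS₂ = D₂'.withLpProdMap D₂'' :=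
    hDS₂.1.eq_withLpProdMap_of_comp_self_eq hD₂'.1 hD₂''.1 <| by
      rw [hDS₂.2, hS₂, one_sub_adjoint_comp_withLpProdMap, hD₂'.2, hD₂''.2]
  have hDS₁s : DS₁s = D₁s'.withLpProdMap D₁s'' :=
    hDS₁s.1.eq_withLpProdMap_of_comp_self_eq hD₁s'.1 hD₁s''.1 <| by
      rw [hDS₁s.2, hS₁, one_sub_withLpProdMap_comp_adjoint, hD₁s'.2, hD₁s''.2]
  rw [hDS₂, hDS₁s, range_withLpProdMap_inf_eq_bot_iff]

/-- The factorization `(T₂' ⊕ T₂'')(T₁' ⊕ T₁'')` of direct sums of contractions is regular if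
and only if both `T₂'T₁'` and `T₂''T₁''` are regular. A factorization `T₂T₁` is regular if the
images of the defect operators `D_{T₂}` and `D_{T₁*}` of the middle space intersect only
in `{0}`; the defect operator of a contraction `T` is the positive square root of `1 - T*T`.
The direct sum of Hilbert spaces is modeled by `WithLp 2 (E × F)` and `S₁ = T₁' ⊕ T₁''`,
`S₂ = T₂' ⊕ T₂''` act componentwise. -/
theorem stmt_5
    {E₁' E₂' E₃' E₁'' E₂'' E₃'' : Type*}
    [NormedAddCommGroup E₁'] [InnerProductSpace ℂ E₁'] [CompleteSpace E₁']
    [NormedAddCommGroup E₂'] [InnerProductSpace ℂ E₂'] [CompleteSpace E₂']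
    [NormedAddCommGroup E₃'] [InnerProductSpace ℂ E₃'] [CompleteSpace E₃']
    [NormedAddCommGroup E₁''] [InnerProductSpace ℂ E₁''] [CompleteSpace E₁'']
    [NormedAddCommGroup E₂''] [InnerProductSpace ℂ E₂''] [CompleteSpace E₂'']
    [NormedAddCommGroup E₃''] [InnerProductSpace ℂ E₃''] [CompleteSpace E₃'']
    (T₁' : E₁' →L[ℂ] E₂') (T₂' : E₂' →L[ℂ] E₃')
    (T₁'' : E₁'' →L[ℂ] E₂'') (T₂'' : E₂'' →L[ℂ] E₃'')
    (hT₁' : ‖T₁'‖ ≤ 1) (hT₂' : ‖T₂'‖ ≤ 1) (hT₁'' : ‖T₁''‖ ≤ 1) (hT₂'' : ‖T₂''‖ ≤ 1)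
    -- the direct sum operators `S₁ = T₁' ⊕ T₁''` and `S₂ = T₂' ⊕ T₂''`
    (S₁ : WithLp 2 (E₁' × E₁'') →L[ℂ] WithLp 2 (E₂' × E₂''))
    (S₂ : WithLp 2 (E₂' × E₂'') →L[ℂ] WithLp 2 (E₃' × E₃''))
    (hS₁ : ∀ x, WithLp.equiv 2 (E₂' × E₂'') (S₁ x) =
      (T₁' (WithLp.equiv 2 (E₁' × E₁'') x).1, T₁'' (WithLp.equiv 2 (E₁' × E₁'') x).2))
    (hS₂ : ∀ x, WithLp.equiv 2 (E₃' × E₃'') (S₂ x) =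
      (T₂' (WithLp.equiv 2 (E₂' × E₂'') x).1, T₂'' (WithLp.equiv 2 (E₂' × E₂'') x).2))
    -- defect operators of `T₂'`, `T₂''`, `S₂` on the respective middle spaces
    (D₂' : E₂' →L[ℂ] E₂') (hD₂' : D₂'.IsPositive ∧ D₂' ∘L D₂' = 1 - adjoint T₂' ∘L T₂')
    (D₂'' : E₂'' →L[ℂ] E₂'') (hD₂'' : D₂''.IsPositive ∧ D₂'' ∘L D₂'' = 1 - adjoint T₂'' ∘L T₂'')
    (DS₂ : WithLp 2 (E₂' × E₂'') →L[ℂ] WithLp 2 (E₂' × E₂''))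
    (hDS₂ : DS₂.IsPositive ∧ DS₂ ∘L DS₂ = 1 - adjoint S₂ ∘L S₂)
    -- defect operators of `T₁'*`, `T₁''*`, `S₁*`
    (D₁s' : E₂' →L[ℂ] E₂') (hD₁s' : D₁s'.IsPositive ∧ D₁s' ∘L D₁s' = 1 - T₁' ∘L adjoint T₁')
    (D₁s'' : E₂'' →L[ℂ] E₂'') (hD₁s'' : D₁s''.IsPositive ∧ D₁s'' ∘L D₁s'' = 1 - T₁'' ∘L adjoint T₁'')
    (DS₁s : WithLp 2 (E₂' × E₂'') →L[ℂ] WithLp 2 (E₂' × E₂''))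
    (hDS₁s : DS₁s.IsPositive ∧ DS₁s ∘L DS₁s = 1 - S₁ ∘L adjoint S₁) :
    (LinearMap.range (DS₂ : WithLp 2 (E₂' × E₂'') →ₗ[ℂ] WithLp 2 (E₂' × E₂'')) ⊓ LinearMap.range (DS₁s : WithLp 2 (E₂' × E₂'') →ₗ[ℂ] WithLp 2 (E₂' × E₂'')) = ⊥) ↔
      ((LinearMap.range (D₂' : E₂' →ₗ[ℂ] E₂') ⊓ LinearMap.range (D₁s' : E₂' →ₗ[ℂ] E₂') = ⊥) ∧
       (LinearMap.range (D₂'' : E₂'' →ₗ[ℂ] E₂'') ⊓ LinearMap.range (D₁s'' : E₂'' →ₗ[ℂ] E₂'') = ⊥)) :=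
  stmt_5_general T₁' T₂' T₁'' T₂'' S₁ S₂ hS₁ hS₂ D₂' hD₂' D₂'' hD₂'' DS₂ hDS₂ D₁s' hD₁s' D₁s''
    hD₁s'' DS₁s hDS₁s
end

section
/- Let A be a unitary operator on a complex Hilbert space H_A and B a contraction on a complex Hilbert space H_B, and suppose Ω : H_A → H_B is a linear isometry with Ω∘A = B∘Ω. Then the range of Ω reduces B (so in particular B restricted to the range of Ω is unitary and A ≺ B). -/
open ContinuousLinearMap

local notation "⟪" x ", " y "⟫" => @inner ℂ _ _ x y

/-- If `A` is unitary, `B` a contraction, and `Ω : H_A → H_B` a linear isometry with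
`Ω∘A = B∘Ω`, then the range of `Ω` reduces `B` (it is invariant under both `B` and `B*`,
and `B` restricted to it is unitary), so in particular `A ≺ B`. -/
theorem stmt_8
    {HA HB : Type*}
    [NormedAddCommGroup HA] [InnerProductSpace ℂ HA] [CompleteSpace HA]
    [NormedAddCommGroup HB] [InnerProductSpace ℂ HB] [CompleteSpace HB]
    (A : HA →L[ℂ] HA) (hAu : A ∈ unitary (HA →L[ℂ] HA))
    (B : HB →L[ℂ] HB) (hB : ‖B‖ ≤ 1)
    (Ω : HA →ₗᵢ[ℂ] HB) (hΩ : ∀ x, Ω (A x) = B (Ω x)) :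
    (∀ y ∈ Set.range ⇑Ω, B y ∈ Set.range ⇑Ω) ∧
    (∀ y ∈ Set.range ⇑Ω, adjoint B y ∈ Set.range ⇑Ω) := by
  constructor
  · rintro y ⟨x, rfl⟩
    exact ⟨A x, hΩ x⟩
  · rintro y ⟨x, rfl⟩
    refine ⟨adjoint A x, ?_⟩
    have hAA : A (adjoint A x) = x := by
      have h : (A * star A) x = x := by rw [hAu.2]; rfl
      simpa [ContinuousLinearMap.mul_apply, star_eq_adjoint] using h
    set y := Ω x with hy
    set u := Ω (adjoint A x) with hu
    have hBu : B u = y := by rw [hu, ← hΩ, hAA]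
    -- ‖u‖ = ‖y‖
    have hnu : ‖u‖ = ‖y‖ := by
      have h1 : ⟪adjoint A x, adjoint A x⟫ = ⟪x, x⟫ := by
        rw [adjoint_inner_left, hAA]
      have h2 : ‖adjoint A x‖ = ‖x‖ := by
        have h3 := congrArg RCLike.re h1
        rw [inner_self_eq_norm_sq (𝕜 := ℂ), inner_self_eq_norm_sq (𝕜 := ℂ)] at h3
        nlinarith [norm_nonneg (adjoint A x), norm_nonneg x]
      simp [hu, hy, Ω.norm_map, h2]
    have hre : RCLike.re ⟪adjoint B y, u⟫ = ‖y‖ ^ 2 := by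
      rw [adjoint_inner_left, hBu]
      exact inner_self_eq_norm_sq (𝕜 := ℂ) y
    have hnB : ‖adjoint B y‖ ≤ ‖y‖ := by
      calc ‖adjoint B y‖ ≤ ‖adjoint B‖ * ‖y‖ := (adjoint B).le_opNorm _
      _ ≤ 1 * ‖y‖ := by
          gcongr
          rw [LinearIsometryEquiv.norm_map]
          exact hB
      _ = ‖y‖ := one_mul _
    have hsub : ‖adjoint B y - u‖ ^ 2 ≤ 0 := by
      have hexp := @norm_sub_sq ℂ _ _ _ _ (adjoint B y) u
      rw [hexp, hre, hnu]
      nlinarith [norm_nonneg (adjoint B y), norm_nonneg y, hnB, mul_self_le_mul_self (norm_nonneg (adjoint B y)) hnB]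
    have : adjoint B y - u = 0 := by
      have := le_antisymm (by nlinarith [norm_nonneg (adjoint B y - u)] :
        ‖adjoint B y - u‖ ≤ 0) (norm_nonneg _)
      exact norm_eq_zero.mp this
    rw [sub_eq_zero] at this
    exact this.symm
end

section
/- Let A and B be unitary operators on complex Hilbert spaces H_A and H_B. If A ≈ B (that is, there exist linear isometries Ω : H_A → H_B and Ω' : H_B → H_A with Ω∘A = B∘Ω and Ω'∘B = A∘Ω'), then A and B are unitarily equivalent, i.e., there is a unitary operator W : H_A → H_B with W∘A = B∘W. -/
open ContinuousLinearMap

/-!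
Hilbert-space Schröder–Bernstein. For isometries `f : E → F` and `g : F → E`, the map
`N ↦ g((f(Nᗮ))ᗮ)` on subspaces of `E` is monotone, so it has a least fixed point `N`. Such a
fixed point is closed, `f` maps `Nᗮ` onto `L := f(Nᗮ)` and `g` maps `Lᗮ` onto `N`, so gluing `f`
on `Nᗮ` with `g⁻¹` on `N` gives a unitary `W : E ≃ F`. If `f` and `g` intertwine the unitaries
`A` and `B`, the map above commutes with `N ↦ A(N)`, hence its least fixed point is `A`-invariant;
then both `N` and `Nᗮ` reduce `A`, and `W` intertwines `A` and `B`.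
-/

theorem OrderHom.apply_lfp_of_commute {α : Type*} [CompleteLattice α] (f : α →o α) (e : α ≃o α)
    (h : Function.Commute f e) : e f.lfp = f.lfp := by
  refine le_antisymm ?_ (f.lfp_le_fixed ?_)
  · rw [← e.le_symm_apply]
    refine f.lfp_le_fixed ?_
    rw [← e.apply_eq_iff_eq, ← h, e.apply_symm_apply, f.map_lfp]
  · rw [h, f.map_lfp]

section

open Submodule

variable {𝕜 E F : Type*} [RCLike 𝕜] [NormedAddCommGroup E] [InnerProductSpace 𝕜 E]
  [NormedAddCommGroup F] [InnerProductSpace 𝕜 F]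

theorem Submodule.completeSpace_map_linearIsometry (K : Submodule 𝕜 E) [CompleteSpace K]
    (f : E →ₗᵢ[𝕜] F) : CompleteSpace (K.map f.toLinearMap) := by
  have hK : IsComplete (K : Set E) := completeSpace_coe_iff_isComplete.1 ‹_›
  exact ((LinearIsometry.isComplete_image_iff f).2 hK).completeSpace_coe

namespace LinearIsometry

def schroederBernsteinMap (f : E →ₗᵢ[𝕜] F) (g : F →ₗᵢ[𝕜] E) :
    Submodule 𝕜 E →o Submodule 𝕜 E where
  toFun N := (Nᗮ.map f.toLinearMap)ᗮ.map g.toLinearMap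
  monotone' _ _ h := map_mono <| orthogonal_le <| map_mono <| orthogonal_le h

theorem schroederBernsteinMap_apply (f : E →ₗᵢ[𝕜] F) (g : F →ₗᵢ[𝕜] E) (N : Submodule 𝕜 E) :
    schroederBernsteinMap f g N = (Nᗮ.map f.toLinearMap)ᗮ.map g.toLinearMap :=
  rfl

theorem schroederBernsteinMap_map_equiv (f : E →ₗᵢ[𝕜] F) (g : F →ₗᵢ[𝕜] E)
    (A : E ≃ₗᵢ[𝕜] E) (B : F ≃ₗᵢ[𝕜] F)
    (hf : ∀ x, f (A x) = B (f x)) (hg : ∀ y, g (B y) = A (g y)) (N : Submodule 𝕜 E) :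
    schroederBernsteinMap f g (N.map (A.toLinearEquiv : E →ₗ[𝕜] E)) =
      (schroederBernsteinMap f g N).map (A.toLinearEquiv : E →ₗ[𝕜] E) := by
  have hf' : f.toLinearMap ∘ₗ (A.toLinearEquiv : E →ₗ[𝕜] E) =
      (B.toLinearEquiv : F →ₗ[𝕜] F) ∘ₗ f.toLinearMap := LinearMap.ext hf
  have hg' : g.toLinearMap ∘ₗ (B.toLinearEquiv : F →ₗ[𝕜] F) =
      (A.toLinearEquiv : E →ₗ[𝕜] E) ∘ₗ g.toLinearMap := LinearMap.ext hg
  rw [schroederBernsteinMap_apply, schroederBernsteinMap_apply, ← map_orthogonal_equiv,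
    ← map_comp, hf', map_comp, ← map_orthogonal_equiv, ← map_comp, hg', map_comp]

variable [CompleteSpace E] [CompleteSpace F]

instance (f : E →ₗᵢ[𝕜] F) (g : F →ₗᵢ[𝕜] E) (N : Submodule 𝕜 E) :
    CompleteSpace (schroederBernsteinMap f g N) :=
  have : CompleteSpace (Nᗮ.map f.toLinearMap) := Nᗮ.completeSpace_map_linearIsometry f
  (Nᗮ.map f.toLinearMap)ᗮ.completeSpace_map_linearIsometry g

theorem adjoint_toContinuousLinearMap_apply_self (g : F →ₗᵢ[𝕜] E) (y : F) :
    adjoint g.toContinuousLinearMap (g y) = y :=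
  DFunLike.congr_fun ((norm_map_iff_adjoint_comp_self g.toContinuousLinearMap).1 g.norm_map) y

theorem exists_linearIsometryEquiv_of_isFixedPt (f : E →ₗᵢ[𝕜] F) (g : F →ₗᵢ[𝕜] E)
    {N : Submodule 𝕜 E} (hN : schroederBernsteinMap f g N = N) :
    ∃ W : E ≃ₗᵢ[𝕜] F, (∀ x ∈ Nᗮ, W x = f x) ∧ ∀ x ∈ N, g (W x) = x := by
  set L := Nᗮ.map f.toLinearMap
  have : CompleteSpace L := Nᗮ.completeSpace_map_linearIsometry f
  have : CompleteSpace N := hN ▸ inferInstance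
  set g' := adjoint g.toContinuousLinearMap
  have hg'g (y : F) : g' (g y) = y := g.adjoint_toContinuousLinearMap_apply_self y
  have hg'N : ∀ v ∈ N, g' v ∈ Lᗮ ∧ g (g' v) = v := by
    intro v hv
    rw [← hN] at hv
    obtain ⟨w, hw, rfl⟩ := hv
    exact ⟨by rwa [coe_toLinearMap, hg'g], by rw [coe_toLinearMap, hg'g]⟩
  set W : E →L[𝕜] F := g' ∘L N.starProjection + f.toContinuousLinearMap ∘L Nᗮ.starProjection
  have hW : ∀ v ∈ N, ∀ u ∈ Nᗮ, W (v + u) = g' v + f u := by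
    intro v hv u hu
    have hPv : N.starProjection v = v := starProjection_eq_self_iff.2 hv
    have hPu : N.starProjection u = 0 := (N.starProjection_apply_eq_zero_iff).2 hu
    have hQv : Nᗮ.starProjection v = 0 :=
      (Nᗮ.starProjection_apply_eq_zero_iff).2 (N.le_orthogonal_orthogonal hv)
    have hQu : Nᗮ.starProjection u = u := starProjection_eq_self_iff.2 hu
    simp only [W, add_apply, comp_apply, map_add, hPv, hPu, hQv, hQu, map_zero, add_zero,
      zero_add]
    rfl
  have hW_norm (x : E) : ‖W x‖ = ‖x‖ := by
    obtain ⟨v, hv, u, hu, rfl⟩ := N.exists_add_mem_mem_orthogonal x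
    have hfu : f u ∈ L := mem_map_of_mem hu
    have key : ‖W (v + u)‖ * ‖W (v + u)‖ = ‖v + u‖ * ‖v + u‖ := by
      rw [hW v hv u hu, norm_add_sq_eq_norm_sq_add_norm_sq_of_inner_eq_zero _ _
          (inner_left_of_mem_orthogonal hfu (hg'N v hv).1),
        norm_add_sq_eq_norm_sq_add_norm_sq_of_inner_eq_zero _ _
          (inner_right_of_mem_orthogonal hv hu),
        f.norm_map, ← g.norm_map (g' v), (hg'N v hv).2]
    exact (mul_self_inj (norm_nonneg _) (norm_nonneg _)).1 key
  have hW_surj : Function.Surjective W := by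
    intro y
    obtain ⟨_, ⟨u, hu, rfl⟩, w, hw, rfl⟩ := L.exists_add_mem_mem_orthogonal y
    have hgw : g w ∈ N := hN ▸ mem_map_of_mem hw
    exact ⟨g w + u, by rw [hW _ hgw u hu, hg'g, add_comm]; rfl⟩
  refine ⟨.ofSurjective ⟨W.toLinearMap, hW_norm⟩ hW_surj, fun x hx => ?_, fun x hx => ?_⟩
  · simpa using hW 0 N.zero_mem x hx
  · simpa [(hg'N x hx).2] using congr(g $(hW x hx 0 (zero_mem _)))

end LinearIsometry

theorem LinearIsometryEquiv.exists_intertwining_of_linearIsometry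
    [CompleteSpace E] [CompleteSpace F] (A : E ≃ₗᵢ[𝕜] E) (B : F ≃ₗᵢ[𝕜] F)
    (f : E →ₗᵢ[𝕜] F) (g : F →ₗᵢ[𝕜] E)
    (hf : ∀ x, f (A x) = B (f x)) (hg : ∀ y, g (B y) = A (g y)) :
    ∃ W : E ≃ₗᵢ[𝕜] F, ∀ x, W (A x) = B (W x) := by
  set N := (f.schroederBernsteinMap g).lfp
  have hN : f.schroederBernsteinMap g N = N := OrderHom.map_lfp _
  have : CompleteSpace N := hN ▸ inferInstance
  have hAN : N.map (A.toLinearEquiv : E →ₗ[𝕜] E) = N :=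
    OrderHom.apply_lfp_of_commute _ (orderIsoMapComap A.toLinearEquiv)
      (f.schroederBernsteinMap_map_equiv g A B hf hg)
  have hAN' : Nᗮ.map (A.toLinearEquiv : E →ₗ[𝕜] E) = Nᗮ := by
    rw [map_orthogonal_equiv, hAN]
  obtain ⟨W, hW_f, hW_g⟩ := f.exists_linearIsometryEquiv_of_isFixedPt g hN
  refine ⟨W, fun x => ?_⟩
  obtain ⟨v, hv, u, hu, rfl⟩ := N.exists_add_mem_mem_orthogonal x
  have hAv : A v ∈ N := hAN ▸ mem_map_of_mem hv
  have hAu : A u ∈ Nᗮ := hAN' ▸ mem_map_of_mem hu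
  have hWAv : W (A v) = B (W v) := g.injective <| by rw [hW_g _ hAv, hg, hW_g v hv]
  rw [map_add, map_add, map_add, hWAv, hW_f _ hAu, hW_f u hu, hf, map_add]

end

/-- If `A` and `B` are unitary operators and `A ≈ B` (there are intertwining linear isometries
in both directions), then `A` and `B` are unitarily equivalent. -/
theorem stmt_9
    {HA HB : Type*}
    [NormedAddCommGroup HA] [InnerProductSpace ℂ HA] [CompleteSpace HA]
    [NormedAddCommGroup HB] [InnerProductSpace ℂ HB] [CompleteSpace HB]
    (A : HA →L[ℂ] HA) (hAu : A ∈ unitary (HA →L[ℂ] HA))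
    (B : HB →L[ℂ] HB) (hBu : B ∈ unitary (HB →L[ℂ] HB))
    (Ω : HA →ₗᵢ[ℂ] HB) (Ω' : HB →ₗᵢ[ℂ] HA)
    (hΩ : ∀ x, Ω (A x) = B (Ω x))
    (hΩ' : ∀ y, Ω' (B y) = A (Ω' y)) :
    ∃ W : HA ≃ₗᵢ[ℂ] HB, ∀ x, W (A x) = B (W x) :=
  LinearIsometryEquiv.exists_intertwining_of_linearIsometry
    (Unitary.linearIsometryEquiv ⟨A, hAu⟩) (Unitary.linearIsometryEquiv ⟨B, hBu⟩) Ω Ω' hΩ hΩ'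
end

section
/- Let U be a unitary operator on a complex Hilbert space H_U of finite multiplicity, meaning there exist finitely many vectors x₁, …, x_n ∈ H_U such that H_U is the orthogonal direct sum of the cyclic subspaces Z_i = closed linear span of {U^k x_i : k ∈ ℤ}, i = 1, …, n. If Y ⊆ H_U is a closed subspace reducing U (invariant under U and U*) such that the restriction U|Y is unitarily equivalent to U, then Y = H_U. -/
/-!
If `Y ≠ H`, pick `v ≠ 0` in `Yᗮ` and let `J : H → Y` be the isometry intertwining `U` that comes
from the unitary equivalence. As `Yᗮ` is `U`-invariant and `J` lands in `Y`, the vectors `Jᵏ v`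
generate infinitely many mutually orthogonal copies of the cyclic representation of `v`, while the
`n` generators `xᵢ` leave room for at most `n` of them.

To make "room" quantitative without spectral theory, use the twisted sums `D_c = ∑_{a<N} c̄ᵃ Uᵃ` at
the `N`-th roots of unity `c`. Each `D_c w` is an approximate eigenvector of `U` for the eigenvalue
`c`, with an error independent of `N`; hence `D_c` maps a finite combination of the `Uᵐ xᵢ` to within
a bounded distance of the span of the `D_c xᵢ`, of dimension at most `n`. On the other hand the `n + 1`
vectors `D_c (Jᵏ v)` are orthogonal of equal norm, so one of them is far from that span. Summing over
`c` with the discrete Parseval identity `∑_c ‖D_c u‖² = N² ‖u‖²` gives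
`N² ‖v‖² ≤ N² ‖v‖² / 2 + O(N)`, which fails for large `N`.
-/

open Finset Module

section InnerProductSpace

variable {𝕜 E : Type*} [RCLike 𝕜] [NormedAddCommGroup E] [InnerProductSpace 𝕜 E]

local notation "⟪" x ", " y "⟫" => inner 𝕜 x y

theorem Orthonormal.sum_norm_sq_starProjection_le_finrank {ι : Type*} [Fintype ι] {e : ι → E}
    (he : Orthonormal 𝕜 e) (V : Submodule 𝕜 E) [FiniteDimensional 𝕜 V] :
    ∑ k, ‖V.starProjection (e k)‖ ^ 2 ≤ finrank 𝕜 V := by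
  set b := stdOrthonormalBasis 𝕜 V
  have hb : Orthonormal 𝕜 fun r => (b r : E) := b.orthonormal.comp_linearIsometry V.subtypeₗᵢ
  have parseval : ∀ k, ‖V.starProjection (e k)‖ ^ 2 = ∑ r, ‖⟪e k, b r⟫‖ ^ 2 := by
    intro k
    have := b.sum_sq_norm_inner_left (V.orthogonalProjectionOnto (e k))
    simp only [Submodule.inner_orthogonalProjectionOnto_eq_of_mem_right] at this
    exact this.symm
  calc ∑ k, ‖V.starProjection (e k)‖ ^ 2 = ∑ r, ∑ k, ‖⟪e k, b r⟫‖ ^ 2 := by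
        simp only [parseval]; exact sum_comm
    _ ≤ ∑ r, ‖(b r : E)‖ ^ 2 := sum_le_sum fun r _ => he.sum_inner_products_le _
    _ = finrank 𝕜 V := by simp [hb.norm_eq_one]

theorem Orthonormal.card_sub_finrank_le_sum_norm_sub_sq {ι : Type*} [Fintype ι] {e : ι → E}
    (he : Orthonormal 𝕜 e) (V : Submodule 𝕜 E) [FiniteDimensional 𝕜 V] {y : ι → E}
    (hy : ∀ k, y k ∈ V) :
    (Fintype.card ι : ℝ) - finrank 𝕜 V ≤ ∑ k, ‖e k - y k‖ ^ 2 := by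
  have dist_le : ∀ k, 1 - ‖V.starProjection (e k)‖ ^ 2 ≤ ‖e k - y k‖ ^ 2 := fun k => by
    have pythagoras := V.norm_sq_eq_add_norm_sq_starProjection (e k)
    rw [he.norm_eq_one, one_pow, Submodule.starProjection_orthogonal'] at pythagoras
    have minimal : ‖e k - V.starProjection (e k)‖ ≤ ‖e k - y k‖ := by
      rw [Submodule.starProjection_minimal]
      exact ciInf_le (f := fun x : V => ‖e k - x‖) ⟨0, by rintro _ ⟨_, rfl⟩; positivity⟩
        ⟨y k, hy k⟩
    have := pow_le_pow_left₀ (norm_nonneg _) minimal 2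
    change _ = _ + ‖e k - V.starProjection (e k)‖ ^ 2 at pythagoras
    linarith
  have hsum := sum_le_sum fun k (_ : k ∈ univ) => dist_le k
  rw [sum_sub_distrib, sum_const, card_univ, nsmul_one] at hsum
  linarith [he.sum_norm_sq_starProjection_le_finrank V]

theorem sq_le_sum_norm_sub_sq_of_pairwise_inner_eq_zero {ι : Type*} [Fintype ι] {z y : ι → E}
    {r : ℝ} (hz : Pairwise fun k l => ⟪z k, z l⟫ = 0) (hr : ∀ k, ‖z k‖ = r)
    (V : Submodule 𝕜 E) [FiniteDimensional 𝕜 V] (hV : finrank 𝕜 V < Fintype.card ι)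
    (hy : ∀ k, y k ∈ V) :
    r ^ 2 ≤ ∑ k, ‖z k - y k‖ ^ 2 := by
  obtain ⟨k₀⟩ : Nonempty ι := Fintype.card_pos_iff.mp (by omega)
  obtain rfl | hr0 := (hr k₀ ▸ norm_nonneg (z k₀) : 0 ≤ r).eq_or_lt
  · rw [zero_pow two_ne_zero]; positivity
  have he : Orthonormal 𝕜 fun k => (r⁻¹ : 𝕜) • z k := by
    refine ⟨fun k => ?_, fun k l hkl => ?_⟩
    · rw [norm_smul, hr, norm_inv, RCLike.norm_ofReal, abs_of_pos hr0, inv_mul_cancel₀ hr0.ne']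
    · simp [inner_smul_left, inner_smul_right, hz hkl]
  have key := he.card_sub_finrank_le_sum_norm_sub_sq V (y := fun k => (r⁻¹ : 𝕜) • y k)
    fun k => V.smul_mem _ (hy k)
  have hV' : (1 : ℝ) ≤ Fintype.card ι - finrank 𝕜 V := by
    rw [le_sub_iff_add_le']; exact_mod_cast hV
  simp only [← smul_sub, norm_smul, norm_inv, RCLike.norm_ofReal, abs_of_pos hr0, mul_pow,
    ← mul_sum] at key
  rw [inv_pow, ← div_eq_inv_mul, le_div_iff₀ (by positivity)] at key
  nlinarith

theorem LinearIsometry.pairwise_inner_pow_apply_eq_zero (J : E →ₗᵢ[𝕜] E) {u : E}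
    (hu : ∀ w, ⟪u, J w⟫ = 0) : Pairwise fun k l : ℕ => ⟪(J ^ k) u, (J ^ l) u⟫ = 0 := by
  have step : ∀ k d, ⟪(J ^ k) u, (J ^ (k + d + 1)) u⟫ = 0 := by
    intro k
    induction k with
    | zero => intro d; rw [pow_succ', coe_mul, Function.comp_apply, pow_zero]; exact hu _
    | succ k ih =>
      intro d
      rw [show k + 1 + d + 1 = k + d + 1 + 1 by omega, pow_succ', pow_succ', coe_mul, coe_mul,
        Function.comp_apply, Function.comp_apply, inner_map_map]
      exact ih d
  intro k l hkl
  rcases lt_or_gt_of_ne hkl with h | h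
  · obtain ⟨d, rfl⟩ := Nat.exists_eq_add_of_lt h
    exact step k d
  · obtain ⟨d, rfl⟩ := Nat.exists_eq_add_of_lt h
    exact inner_eq_zero_symm.mp (step l d)

theorem LinearIsometryEquiv.mapsTo_orthogonal (U : E ≃ₗᵢ[𝕜] E) {K : Submodule 𝕜 E}
    (hK : ∀ y ∈ K, U.symm y ∈ K) : Set.MapsTo U Kᗮ Kᗮ := fun z hz => by
  rw [SetLike.mem_coe, Submodule.mem_orthogonal]
  intro u hu
  rw [← U.apply_symm_apply u, U.inner_map_map]
  exact Submodule.inner_right_of_mem_orthogonal (hK u hu) hz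

theorem LinearIsometryEquiv.coe_pow_eq_iterate (U : E ≃ₗᵢ[𝕜] E) (n : ℕ) :
    ⇑(U ^ n) = U^[n] :=
  hom_coe_pow _ rfl (fun _ _ ↦ rfl) _ _

theorem LinearIsometryEquiv.norm_zpow_apply_sub_smul_le (T : E ≃ₗᵢ[𝕜] E) {c : 𝕜}
    (hc : ‖c‖ = 1) (u : E) (m : ℤ) : ‖(T ^ m) u - c ^ m • u‖ ≤ m.natAbs * ‖T u - c • u‖ := by
  have natPow : ∀ (S : E ≃ₗᵢ[𝕜] E) (c : 𝕜), ‖c‖ = 1 → ∀ k : ℕ,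
      ‖(S ^ k) u - c ^ k • u‖ ≤ k * ‖S u - c • u‖ := by
    intro S c hc k
    induction k with
    | zero => simp
    | succ k ih =>
      have split : (S ^ (k + 1)) u - c ^ (k + 1) • u
          = S ((S ^ k) u - c ^ k • u) + c ^ k • (S u - c • u) := by
        rw [pow_succ', coe_mul, Function.comp_apply, map_sub, map_smul, smul_sub, smul_smul,
          pow_succ]
        abel
      calc ‖(S ^ (k + 1)) u - c ^ (k + 1) • u‖
          ≤ ‖(S ^ k) u - c ^ k • u‖ + ‖S u - c • u‖ := by
            rw [split]
            refine (norm_add_le _ _).trans_eq ?_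
            rw [norm_map, norm_smul, norm_pow, hc, one_pow, one_mul]
        _ ≤ (k + 1 : ℕ) * ‖S u - c • u‖ := by push_cast; linarith
  have hc0 : c ≠ 0 := norm_ne_zero_iff.mp (hc ▸ one_ne_zero)
  obtain ⟨k, rfl | rfl⟩ := m.eq_nat_or_neg
  · simpa using natPow T c hc k
  · have inv_step : ‖T.symm u - c⁻¹ • u‖ = ‖T u - c • u‖ := by
      rw [← T.norm_map, map_sub, map_smul, apply_symm_apply,
        show u - c⁻¹ • T u = c⁻¹ • (c • u - T u) by
          rw [smul_sub, smul_smul, inv_mul_cancel₀ hc0, one_smul],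
        norm_smul, norm_inv, hc, inv_one, one_mul, norm_sub_rev]
    have := natPow T⁻¹ c⁻¹ (by rw [norm_inv, hc, inv_one]) k
    simpa [zpow_neg, inv_step] using this

end InnerProductSpace

theorem IsPrimitiveRoot.geom_sum_pow_mul_star_pow {ζ : ℂ} {N : ℕ} (hζ : IsPrimitiveRoot ζ N)
    {a b : ℕ} (ha : a < N) (hb : b < N) :
    ∑ j ∈ range N, (ζ ^ a * star ζ ^ b) ^ j = if a = b then (N : ℂ) else 0 := by
  have hζ1 : star ζ = ζ⁻¹ := (RCLike.inv_eq_conj (hζ.norm'_eq_one (by omega))).symm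
  have hζ0 : ζ ≠ 0 := hζ.ne_zero (by omega)
  split_ifs with hab
  · simp [hab, hζ1, hζ0]
  · have hne : ζ ^ a * star ζ ^ b ≠ 1 := by
      rw [hζ1, inv_pow, ← div_eq_mul_inv, Ne, div_eq_one_iff_eq (pow_ne_zero _ hζ0)]
      exact fun h => hab (hζ.pow_inj ha hb h)
    have hN : (ζ ^ a * star ζ ^ b) ^ N = 1 := by
      rw [mul_pow, ← pow_mul, ← pow_mul, mul_comm a, mul_comm b, pow_mul, pow_mul, ← star_pow,
        hζ.pow_eq_one]
      simp
    rw [geom_sum_eq hne, hN, sub_self, zero_div]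

section TwistedSum

variable {E : Type*} [NormedAddCommGroup E] [InnerProductSpace ℂ E]

local notation "⟪" x ", " y "⟫" => inner ℂ x y

theorem IsPrimitiveRoot.sum_norm_sq_sum_smul {ζ : ℂ} {N : ℕ} (hζ : IsPrimitiveRoot ζ N)
    (f : ℕ → E) :
    ∑ j ∈ range N, ‖∑ a ∈ range N, star (ζ ^ j) ^ a • f a‖ ^ 2
      = N * ∑ a ∈ range N, ‖f a‖ ^ 2 := by
  set S : ℕ → E := fun j => ∑ a ∈ range N, star (ζ ^ j) ^ a • f a
  have expand : ∀ j, ⟪S j, S j⟫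
      = ∑ a ∈ range N, ∑ b ∈ range N, (ζ ^ a * star ζ ^ b) ^ j * ⟪f a, f b⟫ := fun j => by
    rw [sum_inner]
    refine sum_congr rfl fun a _ => ?_
    rw [inner_sum]
    refine sum_congr rfl fun b _ => ?_
    rw [inner_smul_left, inner_smul_right]
    simp only [star_pow, starRingEnd_apply, star_star]
    ring
  have key : ∑ j ∈ range N, ⟪S j, S j⟫ = N * ∑ a ∈ range N, ⟪f a, f a⟫ := calc
    _ = ∑ a ∈ range N, ∑ b ∈ range N,
          (∑ j ∈ range N, (ζ ^ a * star ζ ^ b) ^ j) * ⟪f a, f b⟫ := by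
      simp only [expand]
      rw [sum_comm]
      refine sum_congr rfl fun a _ => ?_
      rw [sum_comm]
      simp only [sum_mul]
    _ = ∑ a ∈ range N, N * ⟪f a, f a⟫ := sum_congr rfl fun a ha => by
      rw [sum_congr rfl fun b hb => by
        rw [hζ.geom_sum_pow_mul_star_pow (mem_range.1 ha) (mem_range.1 hb)]]
      simp [ha]
    _ = N * ∑ a ∈ range N, ⟪f a, f a⟫ := (mul_sum _ _ _).symm
  simp only [inner_self_eq_norm_sq_to_K] at key
  exact Complex.ofReal_injective (by push_cast; exact key)

def twistedSum (U : E ≃ₗᵢ[ℂ] E) (N : ℕ) (c : ℂ) : E →ₗ[ℂ] E :=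
  ∑ a ∈ range N, star c ^ a • (U ^ a).toLinearEquiv.toLinearMap

variable (U : E ≃ₗᵢ[ℂ] E) (N : ℕ) (c : ℂ)

theorem twistedSum_apply (w : E) :
    twistedSum U N c w = ∑ a ∈ range N, star c ^ a • (U ^ a) w := by
  simp [twistedSum]

theorem twistedSum_apply_of_commute {J : E →ₗ[ℂ] E} (hJ : Function.Commute J U) (w : E) :
    twistedSum U N c (J w) = J (twistedSum U N c w) := by
  simp [twistedSum_apply, U.coe_pow_eq_iterate, (hJ.iterate_right _).eq]

theorem norm_apply_twistedSum_sub_smul_le (hc : ‖c‖ = 1) (w : E) :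
    ‖U (twistedSum U N c w) - c • twistedSum U N c w‖ ≤ 2 * ‖w‖ := by
  set g : ℕ → E := fun a => star c ^ a • (U ^ a) w
  have hcc : c * star c = 1 := by
    rw [← starRingEnd_apply, RCLike.mul_conj, hc]; simp
  have shift : ∀ a, U (g a) = c • g (a + 1) := fun a => by
    simp only [g, map_smul, smul_smul, pow_succ', LinearIsometryEquiv.coe_mul, Function.comp_apply]
    rw [← mul_assoc, hcc, one_mul]
  have telescope : U (twistedSum U N c w) - c • twistedSum U N c w = c • (g N - g 0) := by
    rw [twistedSum_apply, map_sum, smul_sum, ← sum_range_sub, smul_sum, ← sum_sub_distrib]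
    exact sum_congr rfl fun a _ => by rw [smul_sub, ← shift]
  have hg : ∀ a, ‖g a‖ = ‖w‖ := fun a => by
    simp [g, norm_smul, hc]
  rw [telescope, norm_smul, hc, one_mul]
  calc ‖g N - g 0‖ ≤ ‖g N‖ + ‖g 0‖ := norm_sub_le _ _
    _ = 2 * ‖w‖ := by rw [hg, hg]; ring

theorem exists_norm_twistedSum_sub_le_of_mem_span {ι : Type*} (x : ι → E) {w : E}
    (hw : w ∈ Submodule.span ℂ (Set.range fun p : ι × ℤ => (U ^ p.2) (x p.1))) :
    ∃ C : ℝ, ∀ (N : ℕ) (c : ℂ), ‖c‖ = 1 →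
      ∃ y ∈ Submodule.span ℂ (Set.range fun i => twistedSum U N c (x i)),
        ‖twistedSum U N c w - y‖ ≤ C := by
  induction hw using Submodule.span_induction with
  | mem _ hw =>
    obtain ⟨⟨i, m⟩, rfl⟩ := hw
    refine ⟨m.natAbs * (2 * ‖x i‖), fun N c hc => ⟨c ^ m • twistedSum U N c (x i),
      Submodule.smul_mem _ _ (Submodule.subset_span ⟨i, rfl⟩), ?_⟩⟩
    have hcomm : Function.Commute ⇑(U ^ m) ⇑U :=
      fun w => DFunLike.congr_fun (Commute.zpow_self U m).eq w
    change ‖twistedSum U N c ((U ^ m).toLinearEquiv.toLinearMap (x i)) - _‖ ≤ _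
    rw [twistedSum_apply_of_commute U N c hcomm]
    exact (U.norm_zpow_apply_sub_smul_le hc _ m).trans
      (mul_le_mul_of_nonneg_left (norm_apply_twistedSum_sub_smul_le U N c hc _) (by positivity))
  | zero => exact ⟨0, fun N c _ => ⟨0, zero_mem _, by simp⟩⟩
  | add w w' _ _ hw hw' =>
    obtain ⟨C, hC⟩ := hw
    obtain ⟨C', hC'⟩ := hw'
    refine ⟨C + C', fun N c hc => ?_⟩
    obtain ⟨y, hy, hyC⟩ := hC N c hc
    obtain ⟨y', hy', hyC'⟩ := hC' N c hc
    refine ⟨y + y', add_mem hy hy', ?_⟩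
    rw [map_add, add_sub_add_comm]
    exact (norm_add_le _ _).trans (add_le_add hyC hyC')
  | smul a w _ hw =>
    obtain ⟨C, hC⟩ := hw
    refine ⟨‖a‖ * C, fun N c hc => ?_⟩
    obtain ⟨y, hy, hyC⟩ := hC N c hc
    refine ⟨a • y, Submodule.smul_mem _ _ hy, ?_⟩
    rw [map_smul, ← smul_sub, norm_smul]
    exact mul_le_mul_of_nonneg_left hyC (norm_nonneg a)

theorem sum_norm_sq_twistedSum {ζ : ℂ} (hζ : IsPrimitiveRoot ζ N) (u : E) :
    ∑ j ∈ range N, ‖twistedSum U N (ζ ^ j) u‖ ^ 2 = N ^ 2 * ‖u‖ ^ 2 := by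
  simp only [twistedSum_apply, hζ.sum_norm_sq_sum_smul, LinearIsometryEquiv.norm_map, sum_const,
    card_range, nsmul_eq_mul]
  ring

theorem twistedSum_pow_apply (J : E →ₗᵢ[ℂ] E) (hJ : Function.Commute J U) (k : ℕ)
    (u : E) :
    twistedSum U N c ((J ^ k) u) = (J ^ k) (twistedSum U N c u) :=
  twistedSum_apply_of_commute U N c (J := (J ^ k).toLinearMap)
    (by rw [LinearIsometry.coe_toLinearMap, LinearIsometry.coe_pow]; exact hJ.iterate_left k) u

theorem inner_twistedSum_apply_eq_zero {J : E →ₗᵢ[ℂ] E} {v : E}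
    (hv : ∀ (a : ℕ) (w : E), ⟪(U ^ a) v, J w⟫ = 0) (w : E) :
    ⟪twistedSum U N c v, J w⟫ = 0 := by
  simp [twistedSum_apply, hv]

theorem sq_norm_twistedSum_le {ι : Type*} [Fintype ι] (x : ι → E) {J : E →ₗᵢ[ℂ] E}
    (hJ : Function.Commute J U) {v : E} (hv : ∀ (a : ℕ) (w : E), ⟪(U ^ a) v, J w⟫ = 0)
    (w : Fin (Fintype.card ι + 1) → E) (C : Fin (Fintype.card ι + 1) → ℝ)
    (hC : ∀ k, ∃ y ∈ Submodule.span ℂ (Set.range fun i => twistedSum U N c (x i)),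
      ‖twistedSum U N c (w k) - y‖ ≤ C k) :
    ‖twistedSum U N c v‖ ^ 2 ≤ ∑ k : Fin (Fintype.card ι + 1),
      (2 * ‖twistedSum U N c ((J ^ (k : ℕ)) v - w k)‖ ^ 2 + 2 * C k ^ 2) := by
  choose y hy hyC using hC
  have orth : Pairwise fun k l : Fin (Fintype.card ι + 1) =>
      ⟪twistedSum U N c ((J ^ (k : ℕ)) v), twistedSum U N c ((J ^ (l : ℕ)) v)⟫ = 0 :=
    fun k l hkl => by
      dsimp only
      rw [twistedSum_pow_apply U N c J hJ, twistedSum_pow_apply U N c J hJ]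
      exact J.pairwise_inner_pow_apply_eq_zero (inner_twistedSum_apply_eq_zero U N c hv)
        (Fin.val_injective.ne hkl)
  have same_norm : ∀ k : Fin (Fintype.card ι + 1),
      ‖twistedSum U N c ((J ^ (k : ℕ)) v)‖ = ‖twistedSum U N c v‖ := fun k => by
    rw [twistedSum_pow_apply U N c J hJ, LinearIsometry.norm_map]
  have := FiniteDimensional.span_of_finite ℂ (Set.finite_range fun i => twistedSum U N c (x i))
  have hV : finrank ℂ (Submodule.span ℂ (Set.range fun i => twistedSum U N c (x i)))
      < Fintype.card (Fin (Fintype.card ι + 1)) := by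
    rw [Fintype.card_fin]; exact Nat.lt_succ_of_le (finrank_range_le_card _)
  refine (sq_le_sum_norm_sub_sq_of_pairwise_inner_eq_zero orth same_norm _ hV hy).trans
    (sum_le_sum fun k _ => ?_)
  have tri : ‖twistedSum U N c ((J ^ (k : ℕ)) v) - y k‖
      ≤ ‖twistedSum U N c ((J ^ (k : ℕ)) v - w k)‖ + C k := by
    rw [map_sub]
    exact (norm_sub_le_norm_sub_add_norm_sub _ _ _).trans (add_le_add le_rfl (hyC k))
  nlinarith [norm_nonneg (twistedSum U N c ((J ^ (k : ℕ)) v) - y k),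
    sq_nonneg (‖twistedSum U N c ((J ^ (k : ℕ)) v - w k)‖ - C k)]

theorem eq_zero_of_forall_inner_pow_apply_eq_zero {ι : Type*} [Fintype ι] (x : ι → E)
    (hx : Dense (Submodule.span ℂ (Set.range fun p : ι × ℤ => (U ^ p.2) (x p.1)) : Set E))
    {J : E →ₗᵢ[ℂ] E} (hJ : Function.Commute J U) {v : E}
    (hv : ∀ (a : ℕ) (w : E), ⟪(U ^ a) v, J w⟫ = 0) : v = 0 := by
  by_contra hv0
  have hvpos : 0 < ‖v‖ := norm_pos_iff.2 hv0
  set m : ℕ := Fintype.card ι + 1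
  set δ : ℝ := ‖v‖ / (2 * m)
  have hδ : 0 < δ := by positivity
  have approx : ∀ k : Fin m,
      ∃ w ∈ Submodule.span ℂ (Set.range fun p : ι × ℤ => (U ^ p.2) (x p.1)),
        ‖(J ^ (k : ℕ)) v - w‖ < δ := fun k => by
    obtain ⟨w, hw, hdist⟩ := hx.exists_dist_lt ((J ^ (k : ℕ)) v) hδ
    exact ⟨w, hw, by rwa [dist_eq_norm] at hdist⟩
  choose w hw hwδ using approx
  choose C hC using fun k => exists_norm_twistedSum_sub_le_of_mem_span U x (hw k)
  set B := ∑ k, C k ^ 2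
  obtain ⟨N, hN⟩ := exists_nat_gt (4 * B / ‖v‖ ^ 2)
  have hN0 : N ≠ 0 := by
    rintro rfl
    have : 0 ≤ 4 * B / ‖v‖ ^ 2 := by positivity
    simp only [CharP.cast_eq_zero] at hN
    linarith
  have hζ := Complex.isPrimitiveRoot_exp N hN0
  set ζ := Complex.exp (2 * Real.pi * Complex.I / N)
  have total :
      (N : ℝ) ^ 2 * ‖v‖ ^ 2 ≤ ∑ k : Fin m, (2 * N ^ 2 * δ ^ 2 + 2 * N * C k ^ 2) := calc
    (N : ℝ) ^ 2 * ‖v‖ ^ 2 = ∑ j ∈ range N, ‖twistedSum U N (ζ ^ j) v‖ ^ 2 :=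
      (sum_norm_sq_twistedSum U N hζ v).symm
    _ ≤ ∑ j ∈ range N, ∑ k : Fin m,
        (2 * ‖twistedSum U N (ζ ^ j) ((J ^ (k : ℕ)) v - w k)‖ ^ 2 + 2 * C k ^ 2) :=
      sum_le_sum fun j _ => sq_norm_twistedSum_le U N (ζ ^ j) x hJ hv w C fun k =>
        hC k N (ζ ^ j) (by rw [norm_pow, hζ.norm'_eq_one hN0, one_pow])
    _ = ∑ k : Fin m, (2 * N ^ 2 * ‖(J ^ (k : ℕ)) v - w k‖ ^ 2 + 2 * N * C k ^ 2) := by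
      rw [sum_comm]
      refine sum_congr rfl fun k _ => ?_
      rw [sum_add_distrib, ← mul_sum, sum_norm_sq_twistedSum U N hζ, sum_const, card_range,
        nsmul_eq_mul]
      ring
    _ ≤ _ := sum_le_sum fun k _ => by gcongr; exact (hwδ k).le
  rw [sum_add_distrib, sum_const, card_univ, Fintype.card_fin, ← mul_sum, nsmul_eq_mul] at total
  change _ ≤ _ + 2 * N * B at total
  have hm : (1 : ℝ) ≤ m := by simp [m]
  have hδm : 2 * (m : ℝ) * δ ^ 2 ≤ ‖v‖ ^ 2 / 2 := calc
    2 * (m : ℝ) * δ ^ 2 = ‖v‖ ^ 2 / (2 * m) := by simp only [δ]; field_simp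
    _ ≤ ‖v‖ ^ 2 / 2 := by gcongr; linarith
  have hNpos : (0 : ℝ) < N := by positivity
  rw [div_lt_iff₀ (by positivity)] at hN
  nlinarith [mul_le_mul_of_nonneg_left hδm (sq_nonneg (N : ℝ))]

end TwistedSum

theorem stmt_10_general
    {H : Type*} [NormedAddCommGroup H] [InnerProductSpace ℂ H] [CompleteSpace H]
    (U : H ≃ₗᵢ[ℂ] H) {n : ℕ} (x : Fin n → H)
    -- and together they span the whole space
    (hspan : (⨆ i, (Submodule.span ℂ
        (Set.range fun k : ℤ => (U ^ k) (x i))).topologicalClosure) = ⊤)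
    -- `Y` is a closed subspace reducing `U`
    (Y : Submodule ℂ H) (hYc : IsClosed (Y : Set H))
    (hinv : ∀ y ∈ Y, U y ∈ Y) (hinv' : ∀ y ∈ Y, U.symm y ∈ Y)
    -- `U|Y` is unitarily equivalent to `U`
    (hequiv : ∃ W : Y ≃ₗᵢ[ℂ] H, ∀ y : Y, (W ⟨U y, hinv y y.2⟩ : H) = U (W y)) :
    Y = ⊤ := by
  obtain ⟨W, hW⟩ := hequiv
  have : CompleteSpace Y := hYc.completeSpace_coe
  let J : H →ₗᵢ[ℂ] H := Y.subtypeₗᵢ.comp W.symm.toLinearIsometry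
  have hJ : Function.Commute J U := fun z => by
    simpa [J] using congrArg (fun t => (W.symm t : H)) (hW (W.symm z)).symm
  have hdense :
      Dense (Submodule.span ℂ (Set.range fun p : Fin n × ℤ => (U ^ p.2) (x p.1)) : Set H) := by
    rw [Submodule.dense_iff_topologicalClosure_eq_top, eq_top_iff, ← hspan]
    exact iSup_le fun i => Submodule.topologicalClosure_mono
      (Submodule.span_mono (Set.range_subset_iff.2 fun k => ⟨(i, k), rfl⟩))
  rw [← Submodule.orthogonal_eq_bot_iff, Submodule.eq_bot_iff]
  intro v hv
  refine eq_zero_of_forall_inner_pow_apply_eq_zero U x hdense hJ fun a w => ?_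
  have hUv : (U ^ a) v ∈ Yᗮ := by
    rw [U.coe_pow_eq_iterate]; exact (U.mapsTo_orthogonal hinv').iterate a hv
  exact Submodule.inner_left_of_mem_orthogonal (W.symm w).2 hUv

/-- If `U` is a unitary operator of finite multiplicity (the space is the orthogonal direct sum
of finitely many cyclic subspaces `Zᵢ = closed span {Uᵏxᵢ : k ∈ ℤ}`), `Y` is a closed reducing
subspace for `U`, and `U|Y` is unitarily equivalent to `U`, then `Y` is the whole space. -/
theorem stmt_10
    {H : Type*} [NormedAddCommGroup H] [InnerProductSpace ℂ H] [CompleteSpace H]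
    (U : H ≃ₗᵢ[ℂ] H) {n : ℕ} (x : Fin n → H)
    -- the cyclic subspaces are pairwise orthogonal
    (horth : ∀ i j, i ≠ j →
      ∀ y ∈ (Submodule.span ℂ (Set.range fun k : ℤ => (U ^ k) (x i))).topologicalClosure,
      ∀ z ∈ (Submodule.span ℂ (Set.range fun k : ℤ => (U ^ k) (x j))).topologicalClosure,
        (inner ℂ y z : ℂ) = 0)
    -- and together they span the whole space
    (hspan : (⨆ i, (Submodule.span ℂ
        (Set.range fun k : ℤ => (U ^ k) (x i))).topologicalClosure) = ⊤)
    -- `Y` is a closed subspace reducing `U`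
    (Y : Submodule ℂ H) (hYc : IsClosed (Y : Set H))
    (hinv : ∀ y ∈ Y, U y ∈ Y) (hinv' : ∀ y ∈ Y, U.symm y ∈ Y)
    -- `U|Y` is unitarily equivalent to `U`
    (hequiv : ∃ W : Y ≃ₗᵢ[ℂ] H, ∀ y : Y, (W ⟨U y, hinv y y.2⟩ : H) = U (W y)) :
    Y = ⊤ :=
  stmt_10_general U x hspan Y hYc hinv hinv' hequiv
end

section
/- Let A be the bounded operator on ℓ²(ℕ × ℤ) given by (A f)(n, k) = f(n, k − 1) (a countable orthogonal direct sum of bilateral shifts), let S be the unilateral shift on ℓ²(ℕ) given by (S f)(0) = 0 and (S f)(k) = f(k − 1) for k ≥ 1, and let B = A ⊕ S act on the Hilbert direct sum ℓ²(ℕ × ℤ) ⊕ ℓ²(ℕ). Then A is unitary, B is not unitary (so A and B are not unitarily equivalent), and yet A ≈ B: there exist linear isometries Ω : ℓ²(ℕ × ℤ) → ℓ²(ℕ × ℤ) ⊕ ℓ²(ℕ) and Ω' : ℓ²(ℕ × ℤ) ⊕ ℓ²(ℕ) → ℓ²(ℕ × ℤ) with Ω∘A = B∘Ω and Ω'∘B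 = A∘Ω'. -/
/-!
`A` is extension by zero along the bijection `(n, k) ↦ (n, k + 1)` of `ℕ × ℤ`, hence unitary,
while `S` is extension by zero along `k ↦ k + 1`, which misses `0`; so `S`, and with it `B`, is
not surjective, and a unitary equivalence would transport the surjectivity of `A` to `B`.
Including the first summand gives `A ≼ B`. For `B ≼ A`, send `ℓ²(ℕ × ℤ)` to the rows `n ≥ 1`
and `ℓ²(ℕ)` to the nonnegative half of row `0`: both maps are extensions by zero along index
maps that commute with the shifts, and their ranges are orthogonal.
-/

open Function
open scoped ENNReal InnerProductSpace

theorem Function.apply_extend_zero {α β γ δ : Type*} [Zero γ] [Zero δ] {σ : α → β} (f : α → γ)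
    {φ : γ → δ} (hφ : φ 0 = 0) :
    (fun b => φ (extend σ f 0 b)) = extend σ (fun a => φ (f a)) 0 := by
  funext b
  rw [apply_extend φ]
  congr
  funext b
  exact hφ

theorem Function.Semiconj.surjective_right {α β : Type*} {f : α → β} {ga : α → α} {gb : β → β}
    (h : Semiconj f ga gb) (hf : Surjective f) (hga : Surjective ga) : Surjective gb :=
  Surjective.of_comp (g := f) (semiconj_iff_comp_eq.1 h ▸ hf.comp hga)

theorem Memℓp.extend_zero {I J E : Type*} [NormedAddCommGroup E] {p : ℝ≥0∞} {σ : I → J}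
    (hσ : Injective σ) {f : I → E} (hf : Memℓp f p) : Memℓp (extend σ f 0) p := by
  rcases p.trichotomy with rfl | rfl | hp
  · refine memℓp_zero (((memℓp_zero_iff.1 hf).image σ).subset fun j hj => ?_)
    by_cases h : ∃ i, σ i = j
    · obtain ⟨i, rfl⟩ := h
      exact ⟨i, by simpa [hσ.extend_apply] using hj, rfl⟩
    · exact absurd (extend_apply' _ _ _ h) hj
  · refine memℓp_infty (((memℓp_infty_iff.1 hf).union (bddAbove_singleton (a := 0))).mono ?_)
    rw [apply_extend_zero f norm_zero]
    refine (Set.range_extend_subset _ _ _).trans (Set.union_subset_union_right _ ?_)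
    rintro _ ⟨j, -, rfl⟩
    rfl
  · apply memℓp_gen
    rw [apply_extend_zero f (φ := fun x => ‖x‖ ^ p.toReal) (by simp [Real.zero_rpow hp.ne'])]
    exact (summable_extend_zero hσ).2 (hf.summable hp)

namespace lp

variable {I J J' K E : Type*} [NormedAddCommGroup E] {p : ℝ≥0∞}

theorem not_surjective_of_apply_eq_zero [Nontrivial E] {X : Type*}
    {T : X → lp (fun _ : I => E) p} (i : I) (hT : ∀ x, T x i = 0) : ¬Surjective T := by
  classical
  intro hT_surj
  obtain ⟨a, ha⟩ := exists_ne (0 : E)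
  obtain ⟨x, hx⟩ := hT_surj (lp.single p i a)
  have h := lp.single_apply_self (E := fun _ : I => E) p i a
  rw [← hx, hT] at h
  exact ha h.symm

variable [Fact (1 ≤ p)] (𝕜 : Type*) [NormedField 𝕜] [NormedSpace 𝕜 E]

noncomputable def extendZero (hp : p ≠ ∞) {σ : I → J} (hσ : Injective σ) :
    lp (fun _ : I => E) p →ₗᵢ[𝕜] lp (fun _ : J => E) p where
  toFun f := ⟨extend σ f 0, (lp.memℓp f).extend_zero hσ⟩
  map_add' f g := lp.ext <| by
    change extend σ (⇑f + ⇑g) 0 = extend σ f 0 + extend σ g 0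
    simpa using extend_add σ (f : I → E) g 0 0
  map_smul' c f := lp.ext <| by simpa using extend_smul c σ f 0
  norm_map' f := by
    have hp' : 0 < p.toReal := ENNReal.toReal_pos (zero_lt_one.trans_le Fact.out).ne' hp
    refine Real.rpow_left_injOn hp'.ne' (norm_nonneg _) (norm_nonneg _) ?_
    simp only [norm_rpow_eq_tsum hp']
    change ∑' j, ‖extend σ f 0 j‖ ^ p.toReal = _
    rw [apply_extend_zero f (φ := fun x => ‖x‖ ^ p.toReal) (by simp [Real.zero_rpow hp'.ne']),
      tsum_extend_zero hσ]

variable {𝕜} {hp : p ≠ ∞}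

@[simp]
theorem coe_extendZero {σ : I → J} (hσ : Injective σ) (f : lp (fun _ : I => E) p) :
    ⇑(extendZero 𝕜 hp hσ f) = extend σ f 0 :=
  rfl

theorem extendZero_eq_of {σ : I → J} (hσ : Injective σ) {f : lp (fun _ : I => E) p}
    {g : lp (fun _ : J => E) p} (hg : ∀ i, g (σ i) = f i) (hg₀ : ∀ j ∉ Set.range σ, g j = 0) :
    extendZero 𝕜 hp hσ f = g := by
  ext j
  by_cases h : ∃ i, σ i = j
  · obtain ⟨i, rfl⟩ := h
    simp [hσ.extend_apply, hg]
  · simp [extend_apply' _ _ _ h, hg₀ j h]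

theorem extendZero_extendZero {σ : I → J} {τ : J → K} (hσ : Injective σ) (hτ : Injective τ)
    (f : lp (fun _ : I => E) p) :
    extendZero 𝕜 hp hτ (extendZero 𝕜 hp hσ f) = extendZero 𝕜 hp (hτ.comp hσ) f := by
  ext1
  simp [hσ.extend_comp hτ, Pi.zero_comp]

theorem extendZero_extendZero_comm {σ : I → J} {τ : J → K} {σ' : I → J'} {τ' : J' → K}
    (hσ : Injective σ) (hτ : Injective τ) (hσ' : Injective σ') (hτ' : Injective τ')
    (h : τ ∘ σ = τ' ∘ σ') (f : lp (fun _ : I => E) p) :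
    extendZero 𝕜 hp hτ (extendZero 𝕜 hp hσ f) = extendZero 𝕜 hp hτ' (extendZero 𝕜 hp hσ' f) := by
  rw [extendZero_extendZero, extendZero_extendZero]
  ext1
  simp [h]

variable (𝕜 hp) in
noncomputable def extendZeroEquiv (e : I ≃ J) :
    lp (fun _ : I => E) p ≃ₗᵢ[𝕜] lp (fun _ : J => E) p :=
  .ofSurjective (extendZero 𝕜 hp e.injective) fun g =>
    ⟨extendZero 𝕜 hp e.symm.injective g, by
      rw [extendZero_extendZero]
      exact extendZero_eq_of _ (by simp) (by simp)⟩

theorem inner_extendZero_extendZero_eq_zero {𝕜 E : Type*} [RCLike 𝕜] [NormedAddCommGroup E]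
    [InnerProductSpace 𝕜 E] {σ₁ : I → K} {σ₂ : J → K} (hσ₁ : Injective σ₁)
    (hσ₂ : Injective σ₂) (h : Disjoint (Set.range σ₁) (Set.range σ₂))
    (f : lp (fun _ : I => E) 2) (g : lp (fun _ : J => E) 2) :
    ⟪extendZero 𝕜 ENNReal.ofNat_ne_top hσ₁ f, extendZero 𝕜 ENNReal.ofNat_ne_top hσ₂ g⟫_𝕜 = 0 := by
  rw [lp.inner_eq_tsum]
  refine (tsum_congr fun k => ?_).trans tsum_zero
  simp only [coe_extendZero]
  by_cases hk : k ∈ Set.range σ₁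
  · rw [extend_apply' _ _ _ (h.notMem_of_mem_left hk), Pi.zero_apply, inner_zero_right]
  · rw [extend_apply' _ _ _ hk, Pi.zero_apply, inner_zero_left]

end lp

namespace WithLp

variable (p : ℝ≥0∞) [Fact (1 ≤ p)] {𝕜 E F : Type*} [NormedField 𝕜] [NormedAddCommGroup E]
  [NormedSpace 𝕜 E] [NormedAddCommGroup F] [NormedSpace 𝕜 F]

noncomputable def inlₗᵢ : E →ₗᵢ[𝕜] WithLp p (E × F) where
  toLinearMap := (WithLp.linearEquiv p 𝕜 (E × F)).symm.toLinearMap ∘ₗ LinearMap.inl 𝕜 E F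
  norm_map' := WithLp.norm_toLp_fst p E F

@[simp]
theorem inlₗᵢ_apply (x : E) : inlₗᵢ p (𝕜 := 𝕜) (F := F) x = toLp p (x, 0) :=
  rfl

end WithLp

namespace LinearIsometry

variable {𝕜 E F G : Type*} [RCLike 𝕜] [NormedAddCommGroup E] [InnerProductSpace 𝕜 E]
  [NormedAddCommGroup F] [InnerProductSpace 𝕜 F] [NormedAddCommGroup G] [InnerProductSpace 𝕜 G]

noncomputable def coprodOfOrthogonal (u : E →ₗᵢ[𝕜] G) (v : F →ₗᵢ[𝕜] G)
    (huv : ∀ x y, ⟪u x, v y⟫_𝕜 = 0) : WithLp 2 (E × F) →ₗᵢ[𝕜] G where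
  toLinearMap :=
    (u.toLinearMap.coprod v.toLinearMap).comp (WithLp.linearEquiv 2 𝕜 (E × F)).toLinearMap
  norm_map' x := by
    change ‖u x.fst + v x.snd‖ = ‖x‖
    rw [← sq_eq_sq₀ (norm_nonneg _) (norm_nonneg _), WithLp.prod_norm_sq_eq_of_L2, sq,
      norm_add_sq_eq_norm_sq_add_norm_sq_of_inner_eq_zero _ _ (huv _ _), u.norm_map, v.norm_map,
      sq, sq]

@[simp]
theorem coprodOfOrthogonal_apply (u : E →ₗᵢ[𝕜] G) (v : F →ₗᵢ[𝕜] G)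
    (huv : ∀ x y, ⟪u x, v y⟫_𝕜 = 0) (x : WithLp 2 (E × F)) :
    coprodOfOrthogonal u v huv x = u x.fst + v x.snd :=
  rfl

end LinearIsometry

theorem ContinuousLinearMap.surjective_of_mem_unitary {𝕜 H : Type*} [RCLike 𝕜]
    [NormedAddCommGroup H] [InnerProductSpace 𝕜 H] [CompleteSpace H] {u : H →L[𝕜] H}
    (hu : u ∈ unitary (H →L[𝕜] H)) : Surjective u :=
  (Unitary.linearIsometryEquiv ⟨u, hu⟩).surjective

theorem LinearIsometryEquiv.coe_mem_unitary {𝕜 H : Type*} [RCLike 𝕜]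
    [NormedAddCommGroup H] [InnerProductSpace 𝕜 H] [CompleteSpace H] (e : H ≃ₗᵢ[𝕜] H) :
    (e : H →L[𝕜] H) ∈ unitary (H →L[𝕜] H) :=
  (Unitary.linearIsometryEquiv.symm e).prop

def shiftInRow : ℕ × ℤ ≃ ℕ × ℤ :=
  (Equiv.refl ℕ).prodCongr (Equiv.addRight 1)

def nextRow : ℕ × ℤ → ℕ × ℤ :=
  Prod.map Nat.succ id

def rowZero (m : ℕ) : ℕ × ℤ :=
  (0, m)

theorem nextRow_injective : Injective nextRow :=
  Nat.succ_injective.prodMap injective_id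

theorem rowZero_injective : Injective rowZero :=
  fun m m' h => by simpa [rowZero] using h

theorem disjoint_range_nextRow_rowZero : Disjoint (Set.range nextRow) (Set.range rowZero) := by
  rw [Set.disjoint_left]
  rintro _ ⟨x, rfl⟩ ⟨m, h⟩
  simp [nextRow, rowZero, Prod.ext_iff] at h

theorem shiftInRow_comp_nextRow : shiftInRow ∘ nextRow = nextRow ∘ shiftInRow :=
  rfl

theorem shiftInRow_comp_rowZero : shiftInRow ∘ rowZero = rowZero ∘ Nat.succ := by
  funext m
  simp [shiftInRow, rowZero]

section FoldRows

variable (𝕜 : Type*) {E : Type*} [RCLike 𝕜] [NormedAddCommGroup E] [InnerProductSpace 𝕜 E]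

theorem eq_extendZero_shiftInRow {T : lp (fun _ : ℕ × ℤ => E) 2 → lp (fun _ : ℕ × ℤ => E) 2}
    (hT : ∀ f n k, T f (n, k) = f (n, k - 1)) :
    T = lp.extendZero 𝕜 (ENNReal.ofNat_ne_top (n := 2)) shiftInRow.injective := by
  refine funext fun f => (lp.extendZero_eq_of _ (fun _ => ?_) fun j hj => ?_).symm
  · simp [shiftInRow, hT]
  · exact absurd (shiftInRow.surjective j) hj

theorem eq_extendZero_succ {T : lp (fun _ : ℕ => E) 2 → lp (fun _ : ℕ => E) 2}
    (hT₀ : ∀ f, T f 0 = 0) (hT : ∀ f k, T f (k + 1) = f k) :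
    T = lp.extendZero 𝕜 (ENNReal.ofNat_ne_top (n := 2)) Nat.succ_injective := by
  refine funext fun f => (lp.extendZero_eq_of _ (hT f) fun j hj => ?_).symm
  obtain _ | j := j
  · exact hT₀ f
  · exact absurd ⟨j, rfl⟩ hj

noncomputable def foldRows :
    WithLp 2 (lp (fun _ : ℕ × ℤ => E) 2 × lp (fun _ : ℕ => E) 2) →ₗᵢ[𝕜]
      lp (fun _ : ℕ × ℤ => E) 2 :=
  .coprodOfOrthogonal (lp.extendZero 𝕜 ENNReal.ofNat_ne_top nextRow_injective)
    (lp.extendZero 𝕜 ENNReal.ofNat_ne_top rowZero_injective)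
    (lp.inner_extendZero_extendZero_eq_zero _ _ disjoint_range_nextRow_rowZero)

theorem foldRows_toLp_extendZero
    (x : WithLp 2 (lp (fun _ : ℕ × ℤ => E) 2 × lp (fun _ : ℕ => E) 2)) :
    foldRows 𝕜 (WithLp.toLp 2
        (lp.extendZero 𝕜 ENNReal.ofNat_ne_top shiftInRow.injective x.fst,
          lp.extendZero 𝕜 ENNReal.ofNat_ne_top Nat.succ_injective x.snd)) =
      lp.extendZero 𝕜 ENNReal.ofNat_ne_top shiftInRow.injective (foldRows 𝕜 x) := by
  simp only [foldRows, LinearIsometry.coprodOfOrthogonal_apply, WithLp.toLp_fst,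
    WithLp.toLp_snd, map_add]
  rw [lp.extendZero_extendZero_comm _ _ _ _ shiftInRow_comp_nextRow.symm,
    lp.extendZero_extendZero_comm _ _ _ _ shiftInRow_comp_rowZero.symm]

end FoldRows

/-- Let `A` on `ℓ²(ℕ × ℤ)` be given by `(A f)(n, k) = f(n, k − 1)` (a countable direct sum of
bilateral shifts), `S` the unilateral shift on `ℓ²(ℕ)`, and `B = A ⊕ S` on
`ℓ²(ℕ × ℤ) ⊕ ℓ²(ℕ)`. Then `A` is unitary, `B` is not unitary (so `A` and `B` are not unitarily
equivalent), and yet `A ≈ B`. -/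
theorem stmt_12
    (A : lp (fun _ : ℕ × ℤ => ℂ) 2 →L[ℂ] lp (fun _ : ℕ × ℤ => ℂ) 2)
    (hA : ∀ (f : lp (fun _ : ℕ × ℤ => ℂ) 2) (n : ℕ) (k : ℤ), (A f : ℕ × ℤ → ℂ) (n, k) = (f : ℕ × ℤ → ℂ) (n, k - 1))
    (S : lp (fun _ : ℕ => ℂ) 2 →L[ℂ] lp (fun _ : ℕ => ℂ) 2)
    (hS0 : ∀ f : lp (fun _ : ℕ => ℂ) 2, (S f : ℕ → ℂ) 0 = 0)
    (hS : ∀ (f : lp (fun _ : ℕ => ℂ) 2) (k : ℕ), (S f : ℕ → ℂ) (k + 1) = (f : ℕ → ℂ) k)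
    (B : WithLp 2 (lp (fun _ : ℕ × ℤ => ℂ) 2 × lp (fun _ : ℕ => ℂ) 2) →L[ℂ]
         WithLp 2 (lp (fun _ : ℕ × ℤ => ℂ) 2 × lp (fun _ : ℕ => ℂ) 2))
    (hB : ∀ x, WithLp.equiv 2 _ (B x) =
      (A (WithLp.equiv 2 _ x).1, S (WithLp.equiv 2 _ x).2)) :
    -- `A` is unitary, `B` is not
    A ∈ unitary (lp (fun _ : ℕ × ℤ => ℂ) 2 →L[ℂ] lp (fun _ : ℕ × ℤ => ℂ) 2) ∧
    B ∉ unitary (WithLp 2 (lp (fun _ : ℕ × ℤ => ℂ) 2 × lp (fun _ : ℕ => ℂ) 2) →L[ℂ]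
         WithLp 2 (lp (fun _ : ℕ × ℤ => ℂ) 2 × lp (fun _ : ℕ => ℂ) 2)) ∧
    -- `A` and `B` are not unitarily equivalent
    (¬ ∃ W : lp (fun _ : ℕ × ℤ => ℂ) 2 ≃ₗᵢ[ℂ]
        WithLp 2 (lp (fun _ : ℕ × ℤ => ℂ) 2 × lp (fun _ : ℕ => ℂ) 2),
      ∀ x, W (A x) = B (W x)) ∧
    -- and yet `A ≈ B`
    (∃ Ω : lp (fun _ : ℕ × ℤ => ℂ) 2 →ₗᵢ[ℂ]
        WithLp 2 (lp (fun _ : ℕ × ℤ => ℂ) 2 × lp (fun _ : ℕ => ℂ) 2),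
      ∀ x, Ω (A x) = B (Ω x)) ∧
    (∃ Ω' : WithLp 2 (lp (fun _ : ℕ × ℤ => ℂ) 2 × lp (fun _ : ℕ => ℂ) 2) →ₗᵢ[ℂ]
        lp (fun _ : ℕ × ℤ => ℂ) 2,
      ∀ x, Ω' (B x) = A (Ω' x)) := by
  have hA' := eq_extendZero_shiftInRow ℂ hA
  have hS' := eq_extendZero_succ ℂ hS0 hS
  have hB' : ∀ x, B x = WithLp.toLp 2 (A x.fst, S x.snd) := fun x =>
    congr_arg (WithLp.toLp 2) (hB x)
  have hA_unitary : A ∈ unitary _ := by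
    convert (lp.extendZeroEquiv ℂ ENNReal.ofNat_ne_top shiftInRow (E := ℂ) (p := 2)).coe_mem_unitary
    exact DFunLike.coe_injective hA'
  have hB_not_surj : ¬Surjective B := fun hB_surj =>
    lp.not_surjective_of_apply_eq_zero 0 hS0 <| Semiconj.surjective_right (f := WithLp.snd)
      (fun x => by rw [hB']; rfl) (fun g => ⟨WithLp.toLp 2 (0, g), rfl⟩) hB_surj
  have hA_surj := ContinuousLinearMap.surjective_of_mem_unitary hA_unitary
  refine ⟨hA_unitary,
    fun hB_unitary => hB_not_surj (ContinuousLinearMap.surjective_of_mem_unitary hB_unitary),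
    fun ⟨W, hW⟩ => hB_not_surj (Semiconj.surjective_right hW W.surjective hA_surj),
    ⟨WithLp.inlₗᵢ 2, fun x => by simp [hB']⟩, ⟨foldRows ℂ, fun x => ?_⟩⟩
  rw [hB', hA', hS']
  exact foldRows_toLp_extendZero ℂ x
end

section
/- For m ≥ 1 let S_m denote the nilpotent Jordan cell of size m and eigenvalue 0: on an m-dimensional Hilbert space H_m with orthonormal basis e^m_1, …, e^m_m, S_m e^m_k = e^m_{k+1} for k ≤ m − 1 and S_m e^m_m = 0. Let A = ⊕_{m=1}^∞ S_m on H_A = ⊕_{m=1}^∞ H_m and B = ⊕_{m=2}^∞ S_m on H_B = ⊕_{m=2}^∞ H_m (Hilbert space orthogonal direct sums). Then A ≈ B (indeed B ≼ A via the natural embedding of H_B into H_A, and A ≼ B via the isometry Ω with Ω(e^m_k) = e^{m+1}_{k+1}), but A and B are not unitarily equivalent. -/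
/-!
`A` and `B` permute basis vectors along partial successor maps, so any injective reindexing of
the bases that respects the successor maps is an isometry intertwining them: sending the cell of
size `m + 2` of `B` to the cell of the same size of `A` gives `B ≼ A`, and `e^m_k ↦ e^{m+1}_{k+1}`
gives `A ≼ B`.

A unitary equivalence would carry `ker A ⊓ (range A)ᗮ` into `ker B ⊓ (range B)ᗮ`. The first space
contains the basis vector of the `1 × 1` cell of `A`. The second is zero: a vector `y` in it is
orthogonal to each `e^m_{k+1} = B e^m_k`, and `⟪e^m_1, y⟫ = ⟪e^m_2, B y⟫ = 0`.
-/

open ContinuousLinearMap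
open scoped lp

namespace lp

variable {𝕜 : Type*} [RCLike 𝕜] {I J : Type*} [DecidableEq I] [DecidableEq J]

theorem ext_continuousLinearMap_single {F : Type*} [AddCommMonoid F] [Module 𝕜 F]
    [TopologicalSpace F] [T2Space F] {f g : ℓ²(I, 𝕜) →L[𝕜] F}
    (h : ∀ i, f (lp.single 2 i 1) = g (lp.single 2 i 1)) : f = g :=
  lp.ext_continuousLinearMap (by norm_num) fun i => ContinuousLinearMap.ext_ring (h i)

theorem inner_single_one_single_one (i j : I) :
    inner 𝕜 (lp.single 2 i (1 : 𝕜) : ℓ²(I, 𝕜)) (lp.single 2 j 1) = if i = j then 1 else 0 := by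
  rw [lp.inner_single_left, lp.single_apply, Pi.single_apply]
  split_ifs <;> simp_all

theorem orthonormal_single_one : Orthonormal 𝕜 fun i : I => (lp.single 2 i (1 : 𝕜) : ℓ²(I, 𝕜)) :=
  orthonormal_iff_ite.mpr inner_single_one_single_one

noncomputable def reindexIsometry (σ : I → J) (hσ : Function.Injective σ) :
    ℓ²(I, 𝕜) →ₗᵢ[𝕜] ℓ²(J, 𝕜) :=
  (orthonormal_single_one.comp σ hσ).orthogonalFamily.linearIsometry

@[simp]
theorem reindexIsometry_single_one (σ : I → J) (hσ : Function.Injective σ) (i : I) :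
    reindexIsometry σ hσ (lp.single 2 i (1 : 𝕜)) = lp.single 2 (σ i) 1 := by
  simp [reindexIsometry]

end lp

section PartialShift

variable {𝕜 : Type*} [RCLike 𝕜] {I J : Type*} [DecidableEq I] [DecidableEq J]

def IsPartialShift (T : ℓ²(I, 𝕜) →L[𝕜] ℓ²(I, 𝕜)) (s : I → Option I) : Prop :=
  ∀ i, T (lp.single 2 i 1) = (s i).elim 0 (lp.single 2 · (1 : 𝕜))

variable {S : ℓ²(I, 𝕜) →L[𝕜] ℓ²(I, 𝕜)} {T : ℓ²(J, 𝕜) →L[𝕜] ℓ²(J, 𝕜)}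
  {s : I → Option I} {t : J → Option J}

theorem IsPartialShift.reindexIsometry_comp (hS : IsPartialShift S s) (hT : IsPartialShift T t)
    {σ : I → J} (hσ : Function.Injective σ) (hst : ∀ i, t (σ i) = (s i).map σ) (x : ℓ²(I, 𝕜)) :
    lp.reindexIsometry σ hσ (S x) = T (lp.reindexIsometry σ hσ x) := by
  let Φ := (lp.reindexIsometry (𝕜 := 𝕜) σ hσ).toContinuousLinearMap
  suffices Φ.comp S = T.comp Φ from congr($this x)
  refine lp.ext_continuousLinearMap_single fun i => ?_
  simp only [Φ, comp_apply, LinearIsometry.coe_toContinuousLinearMap, hS i,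
    lp.reindexIsometry_single_one, hT (σ i), hst i]
  cases s i <;> simp

theorem IsPartialShift.inner_single_one_apply_of_eq_some (hS : IsPartialShift S s)
    (hs : ∀ i i' j, s i = some j → s i' = some j → i = i') {i j : I} (hij : s i = some j)
    (x : ℓ²(I, 𝕜)) :
    inner 𝕜 (lp.single 2 j (1 : 𝕜)) (S x) = inner 𝕜 (lp.single 2 i (1 : 𝕜)) x := by
  suffices (innerSL 𝕜 (lp.single 2 j (1 : 𝕜))).comp S = innerSL 𝕜 (lp.single 2 i 1) from
    congr($this x)
  refine lp.ext_continuousLinearMap_single fun i' => ?_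
  simp only [comp_apply, innerSL_apply_apply, hS i', lp.inner_single_one_single_one]
  rcases hi' : s i' with _ | j'
  · have : i ≠ i' := by rintro rfl; simp_all
    simp [this]
  · have : j = j' ↔ i = i' :=
      ⟨fun h => hs i i' j hij (h ▸ hi'), by rintro rfl; simp_all⟩
    simp [lp.inner_single_one_single_one, this]

theorem IsPartialShift.inner_single_one_apply_eq_zero (hS : IsPartialShift S s) {j : I}
    (hj : ∀ i, s i ≠ some j) (x : ℓ²(I, 𝕜)) :
    inner 𝕜 (lp.single 2 j (1 : 𝕜)) (S x) = 0 := by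
  suffices (innerSL 𝕜 (lp.single 2 j (1 : 𝕜))).comp S = 0 from congr($this x)
  refine lp.ext_continuousLinearMap_single fun i => ?_
  simp only [comp_apply, innerSL_apply_apply, hS i, zero_apply]
  rcases hi : s i with _ | j'
  · simp
  · have : j ≠ j' := by rintro rfl; exact hj i hi
    simp [lp.inner_single_one_single_one, this]

theorem IsPartialShift.single_one_mem_ker_inf_orthogonal_range (hS : IsPartialShift S s) {j : I}
    (hj : s j = none) (hj' : ∀ i, s i ≠ some j) :
    lp.single 2 j 1 ∈ S.ker ⊓ S.rangeᗮ := by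
  refine ⟨by simp [hS j, hj], ?_⟩
  rintro _ ⟨x, rfl⟩
  rw [inner_eq_zero_symm]
  exact hS.inner_single_one_apply_eq_zero hj' x

theorem IsPartialShift.eq_zero_of_mem_ker_inf_orthogonal_range (hS : IsPartialShift S s)
    (hs : ∀ i i' j, s i = some j → s i' = some j → i = i')
    (hcover : ∀ i, (s i).isSome ∨ ∃ i', s i' = some i) {y : ℓ²(I, 𝕜)}
    (hy : y ∈ S.ker ⊓ S.rangeᗮ) : y = 0 := by
  obtain ⟨hker, hperp⟩ := hy
  rw [SetLike.mem_coe, LinearMap.mem_ker, coe_coe] at hker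
  ext i
  have : inner 𝕜 (lp.single 2 i (1 : 𝕜)) y = 0 := by
    rcases hcover i with hi | ⟨i', hi'⟩
    · obtain ⟨j, hj⟩ := Option.isSome_iff_exists.mp hi
      rw [← hS.inner_single_one_apply_of_eq_some hs hj, hker, inner_zero_right]
    · have := hperp _ ⟨lp.single 2 i' 1, rfl⟩
      simpa [hS i', hi'] using this
  simpa [lp.inner_single_left] using this

end PartialShift

theorem LinearIsometryEquiv.mem_ker_inf_orthogonal_range_of_intertwines {𝕜 E F : Type*}
    [RCLike 𝕜] [NormedAddCommGroup E] [InnerProductSpace 𝕜 E] [NormedAddCommGroup F]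
    [InnerProductSpace 𝕜 F] (W : E ≃ₗᵢ[𝕜] F) {A : E →L[𝕜] E} {B : F →L[𝕜] F}
    (hW : ∀ x, W (A x) = B (W x)) {x : E} (hx : x ∈ A.ker ⊓ A.rangeᗮ) :
    W x ∈ B.ker ⊓ B.rangeᗮ := by
  obtain ⟨hker, hperp⟩ := hx
  rw [SetLike.mem_coe, LinearMap.mem_ker, ContinuousLinearMap.coe_coe] at hker
  refine ⟨by simp [← hW, hker], ?_⟩
  rintro _ ⟨z, rfl⟩
  obtain ⟨w, rfl⟩ := W.surjective z
  rw [ContinuousLinearMap.coe_coe, ← hW, W.inner_map_map]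
  exact hperp _ ⟨w, rfl⟩

section JordanCells

def jordanSucc (n : ℕ) (i : (m : ℕ) × Fin (m + n)) : Option ((m : ℕ) × Fin (m + n)) :=
  if h : (i.2 : ℕ) + 1 < i.1 + n then some ⟨i.1, ⟨i.2 + 1, h⟩⟩ else none

theorem isPartialShift_jordanSucc {𝕜 : Type*} [RCLike 𝕜] {n : ℕ}
    {T : ℓ²((m : ℕ) × Fin (m + n), 𝕜) →L[𝕜] ℓ²((m : ℕ) × Fin (m + n), 𝕜)}
    (hT : ∀ (m : ℕ) (k : Fin (m + n)), T (lp.single 2 ⟨m, k⟩ 1) =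
      if h : (k : ℕ) + 1 < m + n then lp.single 2 ⟨m, ⟨(k : ℕ) + 1, h⟩⟩ 1 else 0) :
    IsPartialShift T (jordanSucc n) := by
  rintro ⟨m, k⟩
  rw [hT, jordanSucc]
  split_ifs <;> rfl

theorem jordanSucc_eq_some_iff {n : ℕ} {i j : (m : ℕ) × Fin (m + n)} :
    jordanSucc n i = some j ↔ i.1 = j.1 ∧ (i.2 : ℕ) + 1 = j.2 := by
  obtain ⟨m, k⟩ := i
  obtain ⟨m', k'⟩ := j
  simp only [jordanSucc]
  split_ifs with h
  · simp only [Option.some.injEq, Sigma.mk.injEq]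
    constructor
    · rintro ⟨rfl, hk⟩
      exact ⟨rfl, by simpa using congrArg Fin.val (eq_of_heq hk)⟩
    · rintro ⟨rfl, hk⟩
      exact ⟨rfl, heq_of_eq (Fin.ext hk)⟩
  · simp only [false_iff, not_and]
    rintro rfl hk
    exact h (hk ▸ k'.2)

theorem jordanSucc_inj {n : ℕ} (i i' j : (m : ℕ) × Fin (m + n)) (hi : jordanSucc n i = some j)
    (hi' : jordanSucc n i' = some j) : i = i' := by
  rw [jordanSucc_eq_some_iff] at hi hi'
  obtain ⟨m, k⟩ := i
  obtain ⟨m', k'⟩ := i'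
  dsimp only at hi hi'
  obtain rfl : m = m' := hi.1.trans hi'.1.symm
  congr
  omega

theorem jordanSucc_isSome_or_exists_eq_some {n : ℕ} (hn : 2 ≤ n) (i : (m : ℕ) × Fin (m + n)) :
    (jordanSucc n i).isSome ∨ ∃ i', jordanSucc n i' = some i := by
  obtain ⟨m, ⟨_ | k, hk⟩⟩ := i
  · left
    simp only [jordanSucc]
    rw [dif_pos (by omega)]
    rfl
  · right
    exact ⟨⟨m, ⟨k, by omega⟩⟩, jordanSucc_eq_some_iff.mpr ⟨rfl, rfl⟩⟩

theorem jordanSucc_ne_some_zero (i : (m : ℕ) × Fin (m + 1)) : jordanSucc 1 i ≠ some ⟨0, 0⟩ := by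
  simp [jordanSucc_eq_some_iff]

def sigmaSuccFst (i : (m : ℕ) × Fin (m + 2)) : (m : ℕ) × Fin (m + 1) := ⟨i.1 + 1, i.2⟩

def sigmaFinSucc (i : (m : ℕ) × Fin (m + 1)) : (m : ℕ) × Fin (m + 2) := ⟨i.1, i.2.succ⟩

theorem sigmaSuccFst_injective : Function.Injective sigmaSuccFst := by
  rintro ⟨m, k⟩ ⟨m', k'⟩ h
  simp_all [sigmaSuccFst]

theorem sigmaFinSucc_injective : Function.Injective sigmaFinSucc := by
  rintro ⟨m, k⟩ ⟨m', k'⟩ h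
  obtain ⟨rfl, h⟩ := Sigma.mk.inj_iff.mp h
  simpa using h

theorem jordanSucc_sigmaSuccFst (i : (m : ℕ) × Fin (m + 2)) :
    jordanSucc 1 (sigmaSuccFst i) = (jordanSucc 2 i).map sigmaSuccFst := by
  unfold jordanSucc sigmaSuccFst
  split_ifs <;> rfl

theorem jordanSucc_sigmaFinSucc (i : (m : ℕ) × Fin (m + 1)) :
    jordanSucc 2 (sigmaFinSucc i) = (jordanSucc 1 i).map sigmaFinSucc := by
  unfold jordanSucc sigmaFinSucc
  split_ifs with h₁ h₂ h₂ <;> simp only [Fin.val_succ] at h₁ h₂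
  · rfl
  · omega
  · omega
  · rfl

end JordanCells

/-- Let `A = ⊕_{m≥1} S_m` and `B = ⊕_{m≥2} S_m`, where `S_m` is the nilpotent Jordan cell of
size `m` (here `H_A = ⊕_{m} ℂ^{m+1}` indexed by `m : ℕ`, so sizes `1, 2, 3, …`, and
`H_B = ⊕_m ℂ^{m+2}`, sizes `2, 3, …`, both modeled as `ℓ²` of the sigma type of basis indices,
with `S_m` mapping the `k`-th basis vector to the `(k+1)`-st and the last one to `0`). Then
`A ≈ B` but `A` and `B` are not unitarily equivalent. -/
theorem stmt_13
    (A : lp (fun _ : (m : ℕ) × Fin (m + 1) => ℂ) 2 →L[ℂ] lp (fun _ : (m : ℕ) × Fin (m + 1) => ℂ) 2)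
    (B : lp (fun _ : (m : ℕ) × Fin (m + 2) => ℂ) 2 →L[ℂ] lp (fun _ : (m : ℕ) × Fin (m + 2) => ℂ) 2)
    (hA : ∀ (m : ℕ) (k : Fin (m + 1)),
      A (lp.single 2 ⟨m, k⟩ 1) =
        if h : (k : ℕ) + 1 < m + 1 then lp.single 2 ⟨m, ⟨(k : ℕ) + 1, h⟩⟩ 1 else 0)
    (hB : ∀ (m : ℕ) (k : Fin (m + 2)),
      B (lp.single 2 ⟨m, k⟩ 1) =
        if h : (k : ℕ) + 1 < m + 2 then lp.single 2 ⟨m, ⟨(k : ℕ) + 1, h⟩⟩ 1 else 0) :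
    -- `B ≼ A`
    (∃ Ω' : lp (fun _ : (m : ℕ) × Fin (m + 2) => ℂ) 2 →ₗᵢ[ℂ]
        lp (fun _ : (m : ℕ) × Fin (m + 1) => ℂ) 2,
      ∀ x, Ω' (B x) = A (Ω' x)) ∧
    -- `A ≼ B`
    (∃ Ω : lp (fun _ : (m : ℕ) × Fin (m + 1) => ℂ) 2 →ₗᵢ[ℂ]
        lp (fun _ : (m : ℕ) × Fin (m + 2) => ℂ) 2,
      ∀ x, Ω (A x) = B (Ω x)) ∧
    -- but `A` and `B` are not unitarily equivalent
    (¬ ∃ W : lp (fun _ : (m : ℕ) × Fin (m + 1) => ℂ) 2 ≃ₗᵢ[ℂ]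
        lp (fun _ : (m : ℕ) × Fin (m + 2) => ℂ) 2,
      ∀ x, W (A x) = B (W x)) := by
  have hA' := isPartialShift_jordanSucc hA
  have hB' := isPartialShift_jordanSucc hB
  refine ⟨⟨_, hB'.reindexIsometry_comp hA' sigmaSuccFst_injective jordanSucc_sigmaSuccFst⟩,
    ⟨_, hA'.reindexIsometry_comp hB' sigmaFinSucc_injective jordanSucc_sigmaFinSucc⟩, ?_⟩
  rintro ⟨W, hW⟩
  have he : lp.single 2 ⟨0, 0⟩ 1 ∈ A.ker ⊓ A.rangeᗮ :=
    hA'.single_one_mem_ker_inf_orthogonal_range rfl jordanSucc_ne_some_zero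
  have hWe := hB'.eq_zero_of_mem_ker_inf_orthogonal_range jordanSucc_inj
    (jordanSucc_isSome_or_exists_eq_some le_rfl)
    (W.mem_ker_inf_orthogonal_range_of_intertwines hW he)
  simpa using congr(‖$hWe‖)
end

section
/- Let A and B be contractions on complex Hilbert spaces H_A and H_B with A ≈ B (there exist linear isometries Ω : H_A → H_B and Ω' : H_B → H_A with Ω∘A = B∘Ω and Ω'∘B = A∘Ω'). Let Y_A ⊆ H_A be a closed subspace reducing A such that A|Y_A is unitary and such that Y_A contains every closed subspace of H_A that reduces A and on which A restricts to a unitary operator (i.e., Y_A is the maximal unitary reducing subspace of A); let Y_B ⊆ H_B be the analogous subspace for B. Then the unitary parts A|Y_A and B|Y_B are unitarily equivalent. -/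
/-!
An isometry intertwining `A` with `B` carries the unitary part of `A` into that of `B`: the image
`Ω Y_A` is closed, `B`-invariant and `B` is unitary on it, and it is also `B*`-invariant because
for a contraction `‖B y‖ = ‖y‖` forces `B* B y = y`. So the unitary parts `U`, `V` embed into each
other by intertwining isometries `J`, `J'`, and it remains to prove a Schröder–Bernstein theorem
for unitaries.

Let `T = J' J`, `N = (range J')ᗮ` and let `E` be the closed span of the `Tⁿ N`. Then `T` maps `E`
isometrically onto `E ⊓ Nᗮ`, so `T` on `E` glued with the identity on `Eᗮ` is an isometry of `H`
onto `range J'`. All these subspaces reduce `U`, so this isometry commutes with `U`, and composing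
it with `J'⁻¹` gives the unitary equivalence.
-/

open ContinuousLinearMap

section

open Set Submodule

variable {𝕜 H K : Type*} [RCLike 𝕜]
  [NormedAddCommGroup H] [InnerProductSpace 𝕜 H]
  [NormedAddCommGroup K] [InnerProductSpace 𝕜 K]

def LinearIsometry.restrict (f : H →ₗᵢ[𝕜] K) {p : Submodule 𝕜 H} {q : Submodule 𝕜 K}
    (hf : ∀ x ∈ p, f x ∈ q) : p →ₗᵢ[𝕜] q :=
  { f.toLinearMap.restrict hf with norm_map' := fun x => f.norm_map x }

theorem Submodule.mapsTo_topologicalClosure_span {F : Type*} [FunLike F H K]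
    [LinearMapClass F 𝕜 H K] [ContinuousMapClass F H K] (f : F) {s : Set H}
    {p : Submodule 𝕜 K} (hp : IsClosed (p : Set K)) (h : MapsTo f s p) :
    MapsTo f (span 𝕜 s).topologicalClosure p := fun _ hx =>
  (span 𝕜 s).topologicalClosure_minimal (t := p.comap (f : H →ₗ[𝕜] K)) (span_le.2 h)
    (hp.preimage (map_continuous f)) hx

theorem Submodule.mapsTo_orthogonal (U : H ≃ₗᵢ[𝕜] H) {p : Submodule 𝕜 H}
    (h : MapsTo U.symm p p) : MapsTo U pᗮ pᗮ := fun x hx =>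
  (mem_orthogonal _ _).2 fun m hm => by
    rw [← U.apply_symm_apply m, U.inner_map_map]
    exact (mem_orthogonal _ _).1 hx _ (h hm)

theorem Submodule.starProjection_apply_comm_of_mapsTo (U : H ≃ₗᵢ[𝕜] H) (p : Submodule 𝕜 H)
    [p.HasOrthogonalProjection] (hU : MapsTo U p p) (hU' : MapsTo U.symm p p) (x : H) :
    p.starProjection (U x) = U (p.starProjection x) :=
  eq_starProjection_of_mem_orthogonal (hU (p.starProjection_apply_mem x)) <| by
    rw [← map_sub]
    exact mapsTo_orthogonal U hU' (sub_starProjection_mem_orthogonal x)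

section Wandering

def wanderingSpace (T : H →ₗᵢ[𝕜] H) (N : Submodule 𝕜 H) : Submodule 𝕜 H :=
  (span 𝕜 (⋃ n, T^[n] '' N)).topologicalClosure

variable (T : H →ₗᵢ[𝕜] H) (N : Submodule 𝕜 H)

theorem iterate_mem_wanderingSpace (n : ℕ) {m : H} (hm : m ∈ N) :
    T^[n] m ∈ wanderingSpace T N :=
  le_topologicalClosure _ (subset_span (mem_iUnion.2 ⟨n, m, hm, rfl⟩))

theorem le_wanderingSpace : N ≤ wanderingSpace T N := fun _ hm =>
  iterate_mem_wanderingSpace T N 0 hm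

theorem isClosed_wanderingSpace : IsClosed (wanderingSpace T N : Set H) :=
  isClosed_topologicalClosure _

theorem mapsTo_wanderingSpace : MapsTo T (wanderingSpace T N) (wanderingSpace T N) := by
  refine mapsTo_topologicalClosure_span T (isClosed_wanderingSpace T N) ?_
  rintro _ ⟨_, ⟨n, rfl⟩, m, hm, rfl⟩
  rw [← Function.iterate_succ_apply' T]
  exact iterate_mem_wanderingSpace T N (n + 1) hm

theorem mapsTo_wanderingSpace_of_commute {F : Type*} [FunLike F H H]
    [LinearMapClass F 𝕜 H H] [ContinuousMapClass F H H] (f : F)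
    (hf : Function.Commute f T) (hN : MapsTo f N N) :
    MapsTo f (wanderingSpace T N) (wanderingSpace T N) := by
  refine mapsTo_topologicalClosure_span f (isClosed_wanderingSpace T N) ?_
  rintro _ ⟨_, ⟨n, rfl⟩, m, hm, rfl⟩
  rw [(hf.iterate_right n).eq]
  exact iterate_mem_wanderingSpace T N n (hN hm)

variable [CompleteSpace H]

theorem exists_apply_eq_of_mem_wanderingSpace (hTN : ∀ x, T x ∈ Nᗮ) {x : H}
    (hx : x ∈ wanderingSpace T N) (hxN : x ∈ Nᗮ) : ∃ e ∈ wanderingSpace T N, T e = x := by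
  have hclosed : IsClosed ((wanderingSpace T N).map T.toLinearMap : Set H) := by
    rw [map_coe]
    exact T.isometry.isClosedEmbedding.isClosedMap _ (isClosed_wanderingSpace T N)
  have hP : MapsTo Nᗮ.starProjection (wanderingSpace T N)
      ((wanderingSpace T N).map T.toLinearMap) := by
    refine mapsTo_topologicalClosure_span _ hclosed ?_
    rintro _ ⟨_, ⟨n, rfl⟩, m, hm, rfl⟩
    cases n with
    | zero =>
      rw [Function.iterate_zero_apply, starProjection_orthogonal_apply_eq_zero hm]
      exact zero_mem _
    | succ n =>
      rw [Function.iterate_succ_apply', starProjection_eq_self_iff.2 (hTN _)]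
      exact mem_map_of_mem (iterate_mem_wanderingSpace T N n hm)
  simpa [starProjection_eq_self_iff.2 hxN] using hP hx

end Wandering

section ExtendById

variable (T : H →ₗᵢ[𝕜] H) (E : Submodule 𝕜 H) [E.HasOrthogonalProjection]

noncomputable def extendById : H →L[𝕜] H :=
  T.toContinuousLinearMap ∘L E.starProjection + Eᗮ.starProjection

theorem extendById_apply (x : H) :
    extendById T E x = T (E.starProjection x) + Eᗮ.starProjection x := rfl

theorem norm_extendById_apply (hT : MapsTo T E E) (x : H) : ‖extendById T E x‖ = ‖x‖ := by
  have horth : inner 𝕜 (T (E.starProjection x)) (Eᗮ.starProjection x) = 0 :=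
    inner_right_of_mem_orthogonal (hT (E.starProjection_apply_mem x))
      (Eᗮ.starProjection_apply_mem x)
  refine (sq_eq_sq₀ (norm_nonneg _) (norm_nonneg _)).1 ?_
  rw [extendById_apply, sq, norm_add_sq_eq_norm_sq_add_norm_sq_of_inner_eq_zero _ _ horth,
    T.norm_map, norm_sq_eq_add_norm_sq_starProjection x E, sq, sq]

theorem extendById_apply_comm (U : H ≃ₗᵢ[𝕜] H) (hTU : ∀ x, T (U x) = U (T x))
    (hU : MapsTo U E E) (hU' : MapsTo U.symm E E) (x : H) :
    extendById T E (U x) = U (extendById T E x) := by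
  have hUperp : MapsTo U Eᗮ Eᗮ := mapsTo_orthogonal U hU'
  have hU'perp : MapsTo U.symm Eᗮ Eᗮ := mapsTo_orthogonal U.symm (by rwa [U.symm_symm])
  rw [extendById_apply, extendById_apply, starProjection_apply_comm_of_mapsTo U E hU hU',
    starProjection_apply_comm_of_mapsTo U Eᗮ hUperp hU'perp, hTU, map_add]

theorem range_extendById {N : Submodule 𝕜 H} (hNE : N ≤ E) (hTN : ∀ x, T x ∈ Nᗮ)
    (hsurj : ∀ x ∈ E, x ∈ Nᗮ → ∃ e ∈ E, T e = x) :
    LinearMap.range (extendById T E : H →ₗ[𝕜] H) = Nᗮ := by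
  have hperp : Eᗮ ≤ Nᗮ := orthogonal_le hNE
  refine le_antisymm ?_ fun m hm => ?_
  · rintro _ ⟨x, rfl⟩
    exact add_mem (hTN _) (hperp (Eᗮ.starProjection_apply_mem x))
  · have hPm : E.starProjection m ∈ Nᗮ := by
      rw [← sub_sub_cancel m (E.starProjection m), ← starProjection_orthogonal_val]
      exact sub_mem hm (hperp (Eᗮ.starProjection_apply_mem m))
    obtain ⟨e, he, hTe⟩ := hsurj _ (E.starProjection_apply_mem m) hPm
    have hQm : Eᗮ.starProjection m ∈ Eᗮ := Eᗮ.starProjection_apply_mem m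
    refine ⟨e + Eᗮ.starProjection m, ?_⟩
    calc extendById T E (e + Eᗮ.starProjection m) = T e + Eᗮ.starProjection m := by
          rw [extendById_apply, map_add E.starProjection, starProjection_eq_self_iff.2 he,
            (E.starProjection_apply_eq_zero_iff).2 hQm, add_zero, map_add,
            starProjection_orthogonal_apply_eq_zero he, zero_add, starProjection_eq_self_iff.2 hQm]
      _ = m := by rw [hTe, starProjection_add_starProjection_orthogonal]

end ExtendById

theorem LinearIsometryEquiv.exists_intertwining_of_mutual_embedding
    [CompleteSpace H] [CompleteSpace K]
    (U : H ≃ₗᵢ[𝕜] H) (V : K ≃ₗᵢ[𝕜] K) (J : H →ₗᵢ[𝕜] K) (J' : K →ₗᵢ[𝕜] H)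
    (hJ : ∀ x, J (U x) = V (J x)) (hJ' : ∀ y, J' (V y) = U (J' y)) :
    ∃ W : H ≃ₗᵢ[𝕜] K, ∀ x, W (U x) = V (W x) := by
  set M := LinearMap.range J'.toLinearMap
  have hMc : IsClosed (M : Set H) := by
    rw [LinearMap.coe_range]
    exact J'.isometry.isClosedEmbedding.isClosed_range
  have : CompleteSpace M := hMc.completeSpace_coe
  set T := J'.comp J
  set E := wanderingSpace T Mᗮ
  have : CompleteSpace E := (isClosed_wanderingSpace T Mᗮ).completeSpace_coe
  have hTU : ∀ x, T (U x) = U (T x) := fun x => by simp [T, hJ, hJ']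
  have hTU' : ∀ x, T (U.symm x) = U.symm (T x) := fun x => by
    rw [U.eq_symm_apply, ← hTU, U.apply_symm_apply]
  have hUM : MapsTo U M M := by
    rintro _ ⟨k, rfl⟩
    exact ⟨V k, hJ' k⟩
  have hU'M : MapsTo U.symm M M := by
    rintro _ ⟨k, rfl⟩
    refine ⟨V.symm k, U.eq_symm_apply.2 ?_⟩
    change U (J' (V.symm k)) = J' k
    rw [← hJ', V.apply_symm_apply]
  have hTM : ∀ x, T x ∈ Mᗮᗮ := fun x => M.le_orthogonal_orthogonal ⟨J x, rfl⟩
  have hUE : MapsTo U E E := mapsTo_wanderingSpace_of_commute T Mᗮ U (fun x => (hTU x).symm)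
    (mapsTo_orthogonal U hU'M)
  have hU'E : MapsTo U.symm E E := mapsTo_wanderingSpace_of_commute T Mᗮ U.symm
    (fun x => (hTU' x).symm) (mapsTo_orthogonal U.symm (by rwa [U.symm_symm]))
  let G : H →ₗᵢ[𝕜] H :=
    ⟨extendById T E, norm_extendById_apply T E (mapsTo_wanderingSpace T Mᗮ)⟩
  have hG : LinearMap.range G.toLinearMap = M :=
    (range_extendById T E (le_wanderingSpace T Mᗮ) hTM
      fun _ hx hxM => exists_apply_eq_of_mem_wanderingSpace T Mᗮ hTM hx hxM).trans
      M.orthogonal_orthogonal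
  let W := G.equivRange.trans ((LinearIsometryEquiv.ofEq _ _ hG).trans J'.equivRange.symm)
  have hJ'W : ∀ x, J' (W x) = G x := fun x => by
    rw [← LinearIsometry.equivRange_apply_coe]
    simp only [W, LinearIsometryEquiv.trans_apply, LinearIsometryEquiv.apply_symm_apply]
    rfl
  refine ⟨W, fun x => J'.injective ?_⟩
  rw [hJ', hJ'W, hJ'W]
  exact extendById_apply_comm T E U hTU hUE hU'E x

theorem ContinuousLinearMap.adjoint_apply_apply_of_norm_apply_eq [CompleteSpace H]
    {B : H →L[𝕜] H} (hB : ‖B‖ ≤ 1) {x : H} (hx : ‖B x‖ = ‖x‖) : adjoint B (B x) = x := by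
  have hle : ‖adjoint B (B x)‖ ≤ ‖x‖ :=
    calc ‖adjoint B (B x)‖ ≤ ‖adjoint B‖ * ‖B x‖ := le_opNorm _ _
      _ ≤ 1 * ‖x‖ := by rw [adjoint.norm_map, hx]; gcongr
      _ = ‖x‖ := one_mul _
  have hre : RCLike.re (inner 𝕜 (adjoint B (B x)) x) = ‖x‖ ^ 2 := by
    rw [adjoint_inner_left, inner_self_eq_norm_sq, hx]
  have hsq : ‖adjoint B (B x) - x‖ ^ 2 ≤ 0 := by
    rw [norm_sub_sq (𝕜 := 𝕜), hre]
    nlinarith [norm_nonneg (adjoint B (B x)), norm_nonneg x]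
  exact sub_eq_zero.1 (norm_eq_zero.1 (by nlinarith [norm_nonneg (adjoint B (B x) - x)]))

structure IsUnitaryOn (A : H →L[𝕜] H) (Z : Submodule 𝕜 H) : Prop where
  isClosed : IsClosed (Z : Set H)
  mapsTo : ∀ y ∈ Z, A y ∈ Z
  norm_apply : ∀ y ∈ Z, ‖A y‖ = ‖y‖
  surj : ∀ y ∈ Z, ∃ z ∈ Z, A z = y

namespace IsUnitaryOn

variable {A : H →L[𝕜] H} {Z : Submodule 𝕜 H}

theorem adjoint_mem [CompleteSpace H] (hA : ‖A‖ ≤ 1) (hZ : IsUnitaryOn A Z) :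
    ∀ y ∈ Z, adjoint A y ∈ Z := by
  intro y hy
  obtain ⟨z, hz, rfl⟩ := hZ.surj y hy
  rwa [adjoint_apply_apply_of_norm_apply_eq hA (hZ.norm_apply z hz)]

theorem map [CompleteSpace H] (hZ : IsUnitaryOn A Z) {B : K →L[𝕜] K} (Ω : H →ₗᵢ[𝕜] K)
    (hΩ : ∀ x, Ω (A x) = B (Ω x)) : IsUnitaryOn B (Z.map Ω.toLinearMap) where
  isClosed := by
    rw [map_coe]
    exact Ω.isometry.isClosedEmbedding.isClosedMap _ hZ.isClosed
  mapsTo := by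
    rintro _ ⟨y, hy, rfl⟩
    exact ⟨A y, hZ.mapsTo y hy, hΩ y⟩
  norm_apply := by
    rintro _ ⟨y, hy, rfl⟩
    change ‖B (Ω y)‖ = ‖Ω y‖
    rw [← hΩ, Ω.norm_map, Ω.norm_map, hZ.norm_apply y hy]
  surj := by
    rintro _ ⟨y, hy, rfl⟩
    obtain ⟨z, hz, rfl⟩ := hZ.surj y hy
    exact ⟨Ω z, mem_map_of_mem hz, (hΩ z).symm⟩

noncomputable def restrict (hZ : IsUnitaryOn A Z) : Z ≃ₗᵢ[𝕜] Z :=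
  LinearIsometryEquiv.ofSurjective
    { (A : H →ₗ[𝕜] H).restrict hZ.mapsTo with norm_map' := fun y => hZ.norm_apply y y.2 }
    fun y => by
      obtain ⟨z, hz, hAz⟩ := hZ.surj y y.2
      exact ⟨⟨z, hz⟩, Subtype.ext hAz⟩

end IsUnitaryOn

end

theorem stmt_14_general
    {HA HB : Type*}
    [NormedAddCommGroup HA] [InnerProductSpace ℂ HA] [CompleteSpace HA]
    [NormedAddCommGroup HB] [InnerProductSpace ℂ HB] [CompleteSpace HB]
    (A : HA →L[ℂ] HA) (B : HB →L[ℂ] HB)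
    (hA : ‖A‖ ≤ 1) (hB : ‖B‖ ≤ 1)
    -- `A ≈ B`
    (Ω : HA →ₗᵢ[ℂ] HB) (Ω' : HB →ₗᵢ[ℂ] HA)
    (hΩ : ∀ x, Ω (A x) = B (Ω x))
    (hΩ' : ∀ y, Ω' (B y) = A (Ω' y))
    -- `Y_A` is a closed subspace reducing `A` on which `A` restricts to a unitary operator
    (YA : Submodule ℂ HA) (hYAc : IsClosed (YA : Set HA))
    (hYAinv : ∀ y ∈ YA, A y ∈ YA)
    (hYAiso : ∀ y ∈ YA, ‖A y‖ = ‖y‖) (hYAsurj : ∀ y ∈ YA, ∃ z ∈ YA, A z = y)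
    -- and `Y_A` is maximal among such subspaces
    (hYAmax : ∀ Z : Submodule ℂ HA, IsClosed (Z : Set HA) →
      (∀ y ∈ Z, A y ∈ Z) → (∀ y ∈ Z, adjoint A y ∈ Z) →
      (∀ y ∈ Z, ‖A y‖ = ‖y‖) → (∀ y ∈ Z, ∃ z ∈ Z, A z = y) → Z ≤ YA)
    -- `Y_B` is the analogous subspace for `B`
    (YB : Submodule ℂ HB) (hYBc : IsClosed (YB : Set HB))
    (hYBinv : ∀ y ∈ YB, B y ∈ YB)
    (hYBiso : ∀ y ∈ YB, ‖B y‖ = ‖y‖) (hYBsurj : ∀ y ∈ YB, ∃ z ∈ YB, B z = y)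
    (hYBmax : ∀ Z : Submodule ℂ HB, IsClosed (Z : Set HB) →
      (∀ y ∈ Z, B y ∈ Z) → (∀ y ∈ Z, adjoint B y ∈ Z) →
      (∀ y ∈ Z, ‖B y‖ = ‖y‖) → (∀ y ∈ Z, ∃ z ∈ Z, B z = y) → Z ≤ YB) :
    -- then the unitary parts `A|Y_A` and `B|Y_B` are unitarily equivalent
    ∃ W : YA ≃ₗᵢ[ℂ] YB, ∀ y : YA, (W ⟨A y, hYAinv y y.2⟩ : HB) = B (W y) := by
  have hUA : IsUnitaryOn A YA := ⟨hYAc, hYAinv, hYAiso, hYAsurj⟩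
  have hUB : IsUnitaryOn B YB := ⟨hYBc, hYBinv, hYBiso, hYBsurj⟩
  have hΩY : ∀ y ∈ YA, Ω y ∈ YB := fun y hy =>
    have hZ := hUA.map Ω hΩ
    hYBmax _ hZ.isClosed hZ.mapsTo (hZ.adjoint_mem hB) hZ.norm_apply hZ.surj
      (Submodule.mem_map_of_mem hy)
  have hΩ'Y : ∀ y ∈ YB, Ω' y ∈ YA := fun y hy =>
    have hZ := hUB.map Ω' hΩ'
    hYAmax _ hZ.isClosed hZ.mapsTo (hZ.adjoint_mem hA) hZ.norm_apply hZ.surj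
      (Submodule.mem_map_of_mem hy)
  have := hYAc.completeSpace_coe
  have := hYBc.completeSpace_coe
  obtain ⟨W, hW⟩ := LinearIsometryEquiv.exists_intertwining_of_mutual_embedding
    hUA.restrict hUB.restrict (Ω.restrict hΩY) (Ω'.restrict hΩ'Y)
    (fun y => Subtype.ext (hΩ y)) (fun y => Subtype.ext (hΩ' y))
  exact ⟨W, fun y => congrArg Subtype.val (hW y)⟩

/-- If `A ≈ B` are contractions and `Y_A`, `Y_B` denote their maximal unitary reducing subspaces
(so `A|Y_A`, `B|Y_B` are the unitary parts of `A` and `B`), then the unitary parts `A|Y_A` and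
`B|Y_B` are unitarily equivalent. -/
theorem stmt_14
    {HA HB : Type*}
    [NormedAddCommGroup HA] [InnerProductSpace ℂ HA] [CompleteSpace HA]
    [NormedAddCommGroup HB] [InnerProductSpace ℂ HB] [CompleteSpace HB]
    (A : HA →L[ℂ] HA) (B : HB →L[ℂ] HB)
    (hA : ‖A‖ ≤ 1) (hB : ‖B‖ ≤ 1)
    -- `A ≈ B`
    (Ω : HA →ₗᵢ[ℂ] HB) (Ω' : HB →ₗᵢ[ℂ] HA)
    (hΩ : ∀ x, Ω (A x) = B (Ω x))
    (hΩ' : ∀ y, Ω' (B y) = A (Ω' y))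
    -- `Y_A` is a closed subspace reducing `A` on which `A` restricts to a unitary operator
    (YA : Submodule ℂ HA) (hYAc : IsClosed (YA : Set HA))
    (hYAinv : ∀ y ∈ YA, A y ∈ YA) (hYAinv' : ∀ y ∈ YA, adjoint A y ∈ YA)
    (hYAiso : ∀ y ∈ YA, ‖A y‖ = ‖y‖) (hYAsurj : ∀ y ∈ YA, ∃ z ∈ YA, A z = y)
    -- and `Y_A` is maximal among such subspaces
    (hYAmax : ∀ Z : Submodule ℂ HA, IsClosed (Z : Set HA) →
      (∀ y ∈ Z, A y ∈ Z) → (∀ y ∈ Z, adjoint A y ∈ Z) →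
      (∀ y ∈ Z, ‖A y‖ = ‖y‖) → (∀ y ∈ Z, ∃ z ∈ Z, A z = y) → Z ≤ YA)
    -- `Y_B` is the analogous subspace for `B`
    (YB : Submodule ℂ HB) (hYBc : IsClosed (YB : Set HB))
    (hYBinv : ∀ y ∈ YB, B y ∈ YB) (hYBinv' : ∀ y ∈ YB, adjoint B y ∈ YB)
    (hYBiso : ∀ y ∈ YB, ‖B y‖ = ‖y‖) (hYBsurj : ∀ y ∈ YB, ∃ z ∈ YB, B z = y)
    (hYBmax : ∀ Z : Submodule ℂ HB, IsClosed (Z : Set HB) →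
      (∀ y ∈ Z, B y ∈ Z) → (∀ y ∈ Z, adjoint B y ∈ Z) →
      (∀ y ∈ Z, ‖B y‖ = ‖y‖) → (∀ y ∈ Z, ∃ z ∈ Z, B z = y) → Z ≤ YB) :
    -- then the unitary parts `A|Y_A` and `B|Y_B` are unitarily equivalent
    ∃ W : YA ≃ₗᵢ[ℂ] YB, ∀ y : YA, (W ⟨A y, hYAinv y y.2⟩ : HB) = B (W y) :=
  stmt_14_general A B hA hB Ω Ω' hΩ hΩ' YA hYAc hYAinv hYAiso hYAsurj hYAmax YB hYBc hYBinv hYBiso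
    hYBsurj hYBmax
end
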